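/- arXiv:2104.14347 — 6 statements merged into one kernel-verified Lean document; each statement's English description precedes it below -/
import Mathlib

section
/- All weighted power-mean divisor methods satisfy weak weighted envy-freeness up to one item (WWEF1): for every p ∈ ℝ and every w ∈ [0,1], the divisor method with function f_{p,w}, where f_{p,w}(t) = (w·t^p + (1−w)·(t+1)^p)^{1/p} for p ≠ 0, f_{0,w}(t) = t^w (t+1)^{1−w}, and f_{p,w}(0) = 0 when p ≤ 0, produces a WWEF1 allocation for every instance (every number of agents and items, weights, and additive utilities). -/
open Finset

/-- The favorite item of an agent with item-utility function `u` among a remaining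
set `R` of items: a highest-valued item, ties broken in favor of the lower-numbered item. -/
noncomputable def favorite {m : ℕ} (u : Fin m → ℝ) (R : Finset (Fin m)) : Option (Fin m) :=
  if h : (R.filter fun j => ∀ j' ∈ R, u j' ≤ u j).Nonempty then
    some ((R.filter fun j => ∀ j' ∈ R, u j' ≤ u j).min' h)
  else none

/-- One step of the picking process: agent `a` picks her favorite remaining item. -/
noncomputable def pickStep {n m : ℕ} (u : Fin n → Fin m → ℝ)
    (st : Finset (Fin m) × (Fin n → Finset (Fin m))) (a : Fin n) :
    Finset (Fin m) × (Fin n → Finset (Fin m)) :=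
  match favorite (u a) st.1 with
  | none => st
  | some j => (st.1.erase j, Function.update st.2 a (insert j (st.2 a)))

/-- The allocation produced by letting agents pick their favorite remaining items
in the order given by the picking sequence `π`. -/
noncomputable def allocate {n m : ℕ} (u : Fin n → Fin m → ℝ) (π : List (Fin n)) :
    Fin n → Finset (Fin m) :=
  (π.foldl (pickStep u) (Finset.univ, fun _ => ∅)).2

/-- Weak weighted envy-freeness up to one item. -/
def isWWEF1 {n m : ℕ} (w : Fin n → ℝ) (u : Fin n → Fin m → ℝ)
    (M : Fin n → Finset (Fin m)) : Prop :=
  ∀ i j : Fin n, ∃ B ⊆ M j, B.card ≤ 1 ∧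
    ((∑ x ∈ M j \ B, u i x) / w j ≤ (∑ x ∈ M i, u i x) / w i ∨
     (∑ x ∈ M j, u i x) / w j ≤ (∑ x ∈ M i ∪ B, u i x) / w i)

/-- A divisor method is given by a strictly increasing `f : ℕ → ℝ` with `t ≤ f t ≤ t + 1`. -/
def IsDivisorFn (f : ℕ → ℝ) : Prop :=
  StrictMono f ∧ ∀ t : ℕ, (t : ℝ) ≤ f t ∧ f t ≤ t + 1

/-- `π` is the picking sequence induced by the divisor method with function `f` and
weights `w`: each pick goes to an agent minimizing `f t_i / w_i` (where `t_i` is the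
number of picks agent `i` has received so far), ties broken toward lower-numbered agents. -/
def IsDivisorSeq {n : ℕ} (f : ℕ → ℝ) (w : Fin n → ℝ) (π : List (Fin n)) : Prop :=
  ∀ (k : ℕ) (hk : k < π.length) (i : Fin n),
    f ((π.take k).count (π.get ⟨k, hk⟩)) / w (π.get ⟨k, hk⟩) ≤
      f ((π.take k).count i) / w i ∧
    (i < π.get ⟨k, hk⟩ →
      f ((π.take k).count (π.get ⟨k, hk⟩)) / w (π.get ⟨k, hk⟩) <
        f ((π.take k).count i) / w i)

/-- The function of the weighted power-mean divisor method with parameters `p` and `c`: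
`f_{p,c}(t) = (c·t^p + (1-c)·(t+1)^p)^{1/p}` for `p ≠ 0`, `f_{0,c}(t) = t^c (t+1)^{1-c}`,
and `f_{p,c}(0) = 0` when `p ≤ 0`. -/
noncomputable def powerMeanFn (p c : ℝ) (t : ℕ) : ℝ :=
  if p ≤ 0 ∧ t = 0 then 0
  else if p = 0 then (t : ℝ) ^ c * ((t : ℝ) + 1) ^ (1 - c)
  else (c * (t : ℝ) ^ p + (1 - c) * ((t : ℝ) + 1) ^ p) ^ (1 / p)




namespace WWEF1aux

noncomputable def clamp (x : ℝ) : ℝ := min 1 (max x 0)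

lemma clamp_nonneg (x : ℝ) : 0 ≤ clamp x := le_min zero_le_one (le_max_right _ _)

lemma clamp_le_one (x : ℝ) : clamp x ≤ 1 := min_le_left _ _

lemma clamp_mono {x y : ℝ} (h : x ≤ y) : clamp x ≤ clamp y :=
  min_le_min le_rfl (max_le_max h le_rfl)

lemma clamp_of_nonpos {x : ℝ} (h : x ≤ 0) : clamp x = 0 := by
  unfold clamp
  rw [max_eq_right h, min_eq_right zero_le_one]

lemma sum_clamp (s : ℕ) (x : ℝ) (hx : 0 ≤ x) :
    ∑ Q ∈ range (s + 1), clamp (x - Q) = min x (s + 1) := by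
  induction s with
  | zero =>
    simp [clamp, max_eq_left hx, min_comm]
  | succ s ih =>
    rw [sum_range_succ, ih]
    push_cast
    rcases le_or_gt x (↑s + 1) with h | h
    · have e1 : min x ((s:ℝ) + 1) = x := min_eq_left h
      have e2 : min x ((s:ℝ) + 1 + 1) = x := min_eq_left (by linarith)
      have e3 : clamp (x - ((s:ℝ) + 1)) = 0 := clamp_of_nonpos (by linarith)
      rw [e1, e2, e3, add_zero]
    · have e1 : min x ((s:ℝ) + 1) = (s:ℝ) + 1 := min_eq_right h.le
      rcases le_or_gt x ((s:ℝ) + 1 + 1) with h2 | h2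
      · have e2 : min x ((s:ℝ) + 1 + 1) = x := min_eq_left h2
        have e3 : clamp (x - ((s:ℝ) + 1)) = x - ((s:ℝ) + 1) := by
          unfold clamp
          rw [max_eq_left (by linarith), min_eq_right (by linarith)]
        rw [e1, e2, e3]; ring
      · have e2 : min x ((s:ℝ) + 1 + 1) = (s:ℝ) + 1 + 1 := min_eq_right h2.le
        have e3 : clamp (x - ((s:ℝ) + 1)) = 1 := by
          unfold clamp
          rw [max_eq_left (by linarith), min_eq_left (by linarith)]
        rw [e1, e2, e3]

/-- The key Abel-type summation lemma. -/
lemma abel (γ : ℕ → ℝ) (s : ℕ) (hγ0 : ∀ Q, 0 ≤ γ Q)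
    (hγm : ∀ a b : ℕ, a ≤ b → b ≤ s → γ b ≤ γ a)
    (ρ : ℝ) (hρ : 0 < ρ) (k : ℕ) (t : ℕ → ℕ)
    (h : ∀ r < k, ρ * (r + 1) ≤ t r + 1 ∧ t r ≤ s) :
    ρ * ∑ r ∈ range k, γ (t r) ≤ ∑ Q ∈ range (s + 1), γ Q := by
  set G : ℝ → ℝ := fun x => ∑ Q ∈ range (s + 1), γ Q * clamp (x - Q) with hG
  have hG0 : G 0 = 0 := by
    apply Finset.sum_eq_zero
    intro Q _
    rw [clamp_of_nonpos (by simp), mul_zero]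
  have step : ∀ r < k, ρ * γ (t r) ≤ G (ρ * (r + 1)) - G (ρ * r) := by
    intro r hr
    obtain ⟨h1, h2⟩ := h r hr
    have hx0 : (0:ℝ) ≤ ρ * r := by positivity
    have hxy : ρ * r ≤ ρ * (r + 1) := by nlinarith
    have hy : ρ * (r + 1) ≤ (s:ℝ) + 1 := by
      have h2' : (t r : ℝ) ≤ s := by exact_mod_cast h2
      linarith
    have key : ∀ Q ∈ range (s + 1),
        γ (t r) * (clamp (ρ * (r+1) - Q) - clamp (ρ * r - Q)) ≤
        γ Q * (clamp (ρ * (r+1) - Q) - clamp (ρ * r - Q)) := by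
      intro Q hQ
      rcases le_or_gt (Q : ℕ) (t r) with hQt | hQt
      · have hd : 0 ≤ clamp (ρ * (r+1) - Q) - clamp (ρ * r - Q) :=
          sub_nonneg.mpr (clamp_mono (by linarith))
        exact mul_le_mul_of_nonneg_right (hγm Q (t r) hQt h2) hd
      · have hQr : (ρ * (r+1) - Q) ≤ 0 := by
          have : (t r : ℝ) + 1 ≤ Q := by exact_mod_cast hQt
          linarith
        rw [clamp_of_nonpos hQr, clamp_of_nonpos (by linarith)]
        simp
    have hdiff : G (ρ * (r + 1)) - G (ρ * r) =
        ∑ Q ∈ range (s + 1), γ Q * (clamp (ρ * (r+1) - Q) - clamp (ρ * r - Q)) := by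
      rw [hG]
      rw [← Finset.sum_sub_distrib]
      congr 1; ext Q; ring
    rw [hdiff]
    calc ρ * γ (t r) = γ (t r) * (min (ρ * (r+1)) ((s:ℝ)+1) - min (ρ * r) ((s:ℝ)+1)) := by
          rw [min_eq_left hy, min_eq_left (by linarith)]; ring
    _ = γ (t r) * (∑ Q ∈ range (s+1), clamp (ρ * (r+1) - Q) - ∑ Q ∈ range (s+1), clamp (ρ * r - Q)) := by
          rw [sum_clamp s _ (by positivity), sum_clamp s _ hx0]
    _ = ∑ Q ∈ range (s + 1), γ (t r) * (clamp (ρ * (r+1) - Q) - clamp (ρ * r - Q)) := by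
          rw [← Finset.sum_sub_distrib, Finset.mul_sum]
    _ ≤ _ := Finset.sum_le_sum key
  have tele : ∑ r ∈ range k, (G (ρ * (r + 1)) - G (ρ * r)) = G (ρ * k) - G 0 := by
    have := Finset.sum_range_sub (fun r => G (ρ * r)) k
    simpa using this
  have hbound : G (ρ * k) ≤ ∑ Q ∈ range (s + 1), γ Q := by
    apply Finset.sum_le_sum
    intro Q _
    calc γ Q * clamp (ρ * k - Q) ≤ γ Q * 1 := by
          exact mul_le_mul_of_nonneg_left (clamp_le_one _) (hγ0 Q)
    _ = γ Q := mul_one _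
  calc ρ * ∑ r ∈ range k, γ (t r) = ∑ r ∈ range k, ρ * γ (t r) := Finset.mul_sum _ _ _
  _ ≤ ∑ r ∈ range k, (G (ρ * (r + 1)) - G (ρ * r)) := Finset.sum_le_sum (fun r hr => step r (mem_range.mp hr))
  _ = G (ρ * k) - G 0 := tele
  _ ≤ ∑ Q ∈ range (s + 1), γ Q := by rw [hG0]; linarith

end WWEF1aux

namespace WWEF1aux

section core
variable {f : ℕ → ℝ}

/-- C1: in the case `wi ≤ wj`: at `j`'s `(r+1)`-st pick (0-indexed `r`),
`(wi/wj) * (r+1) ≤ t + 1` where `t` is `i`'s current count. -/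
lemma lemC1 (hS : ∀ t : ℕ, (t : ℝ) ≤ f t ∧ f t ≤ t + 1)
    (hP1 : ∀ a b : ℕ, a ≤ b → f a * (b + 1) ≤ f b * (a + 1))
    {wi wj : ℝ} (hwi : 0 < wi) (hwj : 0 < wj) (hw : wi ≤ wj)
    {r t : ℕ} (hdiv : f r * wi ≤ f t * wj) :
    (wi / wj) * (r + 1) ≤ (t : ℝ) + 1 := by
  have hρ1 : wi / wj ≤ 1 := (div_le_one hwj).mpr hw
  have hρ0 : 0 < wi / wj := by positivity
  rcases le_or_gt r t with h | h
  · have h' : (r : ℝ) + 1 ≤ (t : ℝ) + 1 := by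
      have : (r:ℝ) ≤ t := by exact_mod_cast h
      linarith
    nlinarith
  · have hr1 : 1 ≤ r := by omega
    have hfr : (1:ℝ) ≤ f r := by
      have h1 : (1:ℝ) ≤ (r:ℝ) := by exact_mod_cast hr1
      linarith [(hS r).1]
    have hP := hP1 t r h.le
    have h1 : f r * wi * ((r:ℝ)+1) ≤ f t * ((r:ℝ)+1) * wj := by nlinarith
    have h2 : f t * ((r:ℝ)+1) * wj ≤ f r * ((t:ℝ)+1) * wj := by nlinarith
    have h4 : wi * ((r:ℝ)+1) ≤ wj * ((t:ℝ)+1) := by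
      have h3 : f r * (wi * ((r:ℝ)+1)) ≤ f r * (wj * ((t:ℝ)+1)) := by nlinarith
      exact le_of_mul_le_mul_left h3 (by linarith)
    rw [div_mul_eq_mul_div, div_le_iff₀ hwj]
    nlinarith

/-- C2: in the case `wj ≤ wi`: at `j`'s `(r+1)`-st pick with `r ≥ 1`,
`(wi/wj) * r ≤ t`. -/
lemma lemC2 (hS : ∀ t : ℕ, (t : ℝ) ≤ f t ∧ f t ≤ t + 1)
    (hP1 : ∀ a b : ℕ, a ≤ b → f a * (b + 1) ≤ f b * (a + 1))
    (hP2 : ∀ a b : ℕ, 1 ≤ a → a ≤ b → f b * a ≤ f a * b)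
    {wi wj : ℝ} (hwi : 0 < wi) (hwj : 0 < wj) (hw : wj ≤ wi)
    {r t : ℕ} (hr : 1 ≤ r) (hdiv : f r * wi ≤ f t * wj) :
    (wi / wj) * r ≤ (t : ℝ) := by
  have hr1 : (1:ℝ) ≤ (r:ℝ) := by exact_mod_cast hr
  have hfr : (1:ℝ) ≤ f r := by linarith [(hS r).1]
  have hft0 : (0:ℝ) ≤ f t := le_trans (by positivity) (hS t).1
  have hrt : r ≤ t := by
    by_contra hcon
    push_neg at hcon
    have ht1r : (t:ℝ) + 1 ≤ (r:ℝ) := by exact_mod_cast hcon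
    have hfrt : f r ≤ f t := by nlinarith
    have e2 : f r = (r:ℝ) := by linarith [(hS r).1, (hS t).2]
    have e1 : f t = (r:ℝ) := by linarith [(hS t).2, (hS r).1]
    have e3 : (t:ℝ) + 1 = (r:ℝ) := by linarith [(hS t).2, (hS r).1]
    have hP := hP1 t r (Nat.le_of_lt hcon)
    rw [e1, e2, e3] at hP
    nlinarith
  have htr : (r:ℝ) ≤ (t:ℝ) := by exact_mod_cast hrt
  have hP := hP2 r t hr hrt
  have h4 : wi * (r:ℝ) ≤ wj * (t:ℝ) := by
    have h1 : f r * (wi * (r:ℝ)) ≤ f r * (wj * (t:ℝ)) := by nlinarith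
    exact le_of_mul_le_mul_left h1 (by linarith)
  rw [div_mul_eq_mul_div, div_le_iff₀ hwj]
  nlinarith

/-- Core case 1: `wi ≤ wj`. -/
lemma core1 (hS : ∀ t : ℕ, (t : ℝ) ≤ f t ∧ f t ≤ t + 1)
    (hP1 : ∀ a b : ℕ, a ≤ b → f a * (b + 1) ≤ f b * (a + 1))
    {wi wj : ℝ} (hwi : 0 < wi) (hwj : 0 < wj) (hw : wi ≤ wj)
    (s k : ℕ) (α : ℕ → ℝ) (hα0 : ∀ q, 0 ≤ α q)
    (hαm : ∀ q q' : ℕ, q ≤ q' → q' < s → α q' ≤ α q)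
    (d : ℕ → ℝ) (t : ℕ → ℕ)
    (hts : ∀ r < k, t r ≤ s)
    (hdα : ∀ r < k, ∀ q < t r, d r ≤ α q)
    (hdiv : ∀ r < k, f r * wi ≤ f (t r) * wj)
    (dstar : ℝ) (hdm : ∀ r < k, d r ≤ dstar) (hds0 : 0 ≤ dstar) :
    (∑ r ∈ range k, d r) / wj ≤ ((∑ q ∈ range s, α q) + dstar) / wi := by
  set ρ := wi / wj with hρ
  have hρ0 : 0 < ρ := by positivity
  set γ : ℕ → ℝ := fun Q => if Q = 0 then dstar else min dstar (α (Q - 1)) with hγ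
  have hγ0 : ∀ Q, 0 ≤ γ Q := by
    intro Q
    rw [hγ]
    dsimp only
    split
    · exact hds0
    · exact le_min hds0 (hα0 _)
  have hγm : ∀ a b : ℕ, a ≤ b → b ≤ s → γ b ≤ γ a := by
    intro a b hab hbs
    have hγa : ∀ x : ℕ, γ x = if x = 0 then dstar else min dstar (α (x - 1)) := fun x => rfl
    rw [hγa a, hγa b]
    rcases Nat.eq_zero_or_pos b with hb | hb
    · have ha0 : a = 0 := by omega
      simp [ha0, hb]
    · rw [if_neg (by omega : ¬ b = 0)]
      rcases Nat.eq_zero_or_pos a with ha | ha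
      · rw [if_pos ha]
        exact min_le_left _ _
      · rw [if_neg (by omega : ¬ a = 0)]
        exact min_le_min le_rfl (hαm (a - 1) (b - 1) (by omega) (by omega))
  have habel : ρ * ∑ r ∈ range k, γ (t r) ≤ ∑ Q ∈ range (s + 1), γ Q := by
    apply abel γ s hγ0 hγm ρ hρ0 k t
    intro r hr
    exact ⟨lemC1 hS hP1 hwi hwj hw (hdiv r hr), hts r hr⟩
  have hdγ : ∀ r < k, d r ≤ γ (t r) := by
    intro r hr
    rw [hγ]; dsimp only
    split
    · exact hdm r hr
    · refine le_min (hdm r hr) (hdα r hr _ (by omega))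
  have hsum1 : ∑ r ∈ range k, d r ≤ ∑ r ∈ range k, γ (t r) :=
    Finset.sum_le_sum (fun r hr => hdγ r (mem_range.mp hr))
  have hsum2 : ∑ Q ∈ range (s + 1), γ Q ≤ dstar + ∑ q ∈ range s, α q := by
    rw [Finset.sum_range_succ']
    have h1 : ∑ Q ∈ range s, γ (Q + 1) ≤ ∑ q ∈ range s, α q := by
      apply Finset.sum_le_sum
      intro q _
      rw [hγ]; dsimp only
      rw [if_neg (Nat.succ_ne_zero q)]
      simpa using min_le_right dstar (α q)
    have h2 : γ 0 = dstar := by simp [hγ]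
    rw [h2]
    linarith
  rw [div_le_div_iff₀ hwj hwi]
  have : ρ * ∑ r ∈ range k, d r ≤ dstar + ∑ q ∈ range s, α q := by
    calc ρ * ∑ r ∈ range k, d r ≤ ρ * ∑ r ∈ range k, γ (t r) := by nlinarith
    _ ≤ ∑ Q ∈ range (s + 1), γ Q := habel
    _ ≤ dstar + ∑ q ∈ range s, α q := hsum2
  rw [hρ] at this
  have h9 : (∑ r ∈ range k, d r) * wi = ((wi / wj) * ∑ r ∈ range k, d r) * wj := by
    field_simp
  rw [h9]
  nlinarith

/-- Core case 2: `wj ≤ wi`. -/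
lemma core2 (hS : ∀ t : ℕ, (t : ℝ) ≤ f t ∧ f t ≤ t + 1)
    (hP1 : ∀ a b : ℕ, a ≤ b → f a * (b + 1) ≤ f b * (a + 1))
    (hP2 : ∀ a b : ℕ, 1 ≤ a → a ≤ b → f b * a ≤ f a * b)
    {wi wj : ℝ} (hwi : 0 < wi) (hwj : 0 < wj) (hw : wj ≤ wi)
    (s k : ℕ) (α : ℕ → ℝ) (hα0 : ∀ q, 0 ≤ α q)
    (hαm : ∀ q q' : ℕ, q ≤ q' → q' < s → α q' ≤ α q)
    (d : ℕ → ℝ) (t : ℕ → ℕ)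
    (hts : ∀ r < k, t r ≤ s)
    (hdα : ∀ r < k, ∀ q < t r, d r ≤ α q)
    (hdiv : ∀ r < k, f r * wi ≤ f (t r) * wj) :
    (∑ r ∈ Finset.Ico 1 k, d r) / wj ≤ (∑ q ∈ range s, α q) / wi := by
  have hα' : 0 ≤ ∑ q ∈ range s, α q := Finset.sum_nonneg (fun q _ => hα0 q)
  rcases le_or_gt k 1 with hk | hk
  · have : Finset.Ico 1 k = ∅ := by
      apply Finset.Ico_eq_empty
      omega
    rw [this]
    simp only [Finset.sum_empty, zero_div]
    positivity
  -- k ≥ 2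
  set ρ := wi / wj with hρ
  have hρ0 : 0 < ρ := by positivity
  have hρ1 : 1 ≤ ρ := (one_le_div hwj).mpr hw
  have hC2 : ∀ r, 1 ≤ r → r < k → ρ * r ≤ (t r : ℝ) :=
    fun r h1 h2 => lemC2 hS hP1 hP2 hwi hwj hw h1 (hdiv r h2)
  have ht1 : ∀ r, 1 ≤ r → r < k → 1 ≤ t r := by
    intro r h1 h2
    have := hC2 r h1 h2
    have hr1 : (1:ℝ) ≤ (r:ℝ) := by exact_mod_cast h1
    have : (1:ℝ) ≤ (t r : ℝ) := by nlinarith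
    exact_mod_cast this
  have hs1 : 1 ≤ s := le_trans (ht1 1 le_rfl hk) (hts 1 hk)
  have habel : ρ * ∑ r' ∈ range (k - 1), α (t (r' + 1) - 1) ≤ ∑ Q ∈ range (s - 1 + 1), α Q := by
    apply abel α (s - 1) hα0 (fun a b hab hbs => hαm a b hab (by omega)) ρ hρ0 (k - 1)
      (fun r' => t (r' + 1) - 1)
    intro r' hr'
    have hrk : r' + 1 < k := by omega
    have h1 := hC2 (r' + 1) (by omega) hrk
    have ht1' := ht1 (r' + 1) (by omega) hrk
    constructor
    · have : ((t (r' + 1) - 1 : ℕ) : ℝ) + 1 = (t (r' + 1) : ℝ) := by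
        have : (1:ℕ) ≤ t (r' + 1) := ht1'
        push_cast [Nat.cast_sub this]
        ring
      rw [this]
      convert h1 using 2
      push_cast
      ring
    · have := hts (r' + 1) hrk
      omega
  have hds : ∀ r' < k - 1, d (r' + 1) ≤ α (t (r' + 1) - 1) := by
    intro r' hr'
    apply hdα (r' + 1) (by omega)
    have := ht1 (r' + 1) (by omega) (by omega)
    omega
  have hsum : ∑ r ∈ Finset.Ico 1 k, d r = ∑ r' ∈ range (k - 1), d (r' + 1) := by
    rw [Finset.sum_Ico_eq_sum_range]
    apply Finset.sum_congr rfl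
    intro x _
    congr 1
    omega
  have hfin : ρ * ∑ r ∈ Finset.Ico 1 k, d r ≤ ∑ q ∈ range s, α q := by
    rw [hsum]
    have h1 : ∑ r' ∈ range (k - 1), d (r' + 1) ≤ ∑ r' ∈ range (k - 1), α (t (r' + 1) - 1) :=
      Finset.sum_le_sum (fun r hr => hds r (mem_range.mp hr))
    have h2 : s - 1 + 1 = s := by omega
    rw [h2] at habel
    nlinarith
  rw [div_le_div_iff₀ hwj hwi]
  have h9 : (∑ r ∈ Finset.Ico 1 k, d r) * wi = (ρ * ∑ r ∈ Finset.Ico 1 k, d r) * wj := by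
    rw [hρ]; field_simp
  rw [h9]
  nlinarith

end core
end WWEF1aux

namespace WWEF1aux

section pm
variable {p c : ℝ}

lemma pm_def_zero (hp : p ≤ 0) (c : ℝ) : powerMeanFn p c 0 = 0 := by
  rw [powerMeanFn, if_pos ⟨hp, rfl⟩]

lemma pm_def_geo (c : ℝ) {t : ℕ} (ht : t ≠ 0) :
    powerMeanFn 0 c t = (t:ℝ) ^ c * ((t:ℝ) + 1) ^ (1 - c) := by
  rw [powerMeanFn, if_neg (by tauto), if_pos rfl]

lemma pm_def_mean {t : ℕ} (hp0 : p ≠ 0) (h : ¬(p ≤ 0 ∧ t = 0)) (c : ℝ) :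
    powerMeanFn p c t = (c * (t:ℝ) ^ p + (1 - c) * ((t:ℝ) + 1) ^ p) ^ (1/p) := by
  rw [powerMeanFn, if_neg h, if_neg hp0]

lemma inside_nonneg (hc0 : 0 ≤ c) (hc1 : c ≤ 1) {x y : ℝ} (hx : 0 ≤ x) (hy : 0 ≤ y) :
    0 ≤ c * x ^ p + (1 - c) * y ^ p := by
  have h1 := Real.rpow_nonneg hx p
  have h2 := Real.rpow_nonneg hy p
  nlinarith

lemma inside_pos (hc0 : 0 ≤ c) (hc1 : c ≤ 1) {x y : ℝ} (hx : 0 < x) (hy : 0 < y) :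
    0 < c * x ^ p + (1 - c) * y ^ p := by
  have h1 := Real.rpow_pos_of_pos hx p
  have h2 := Real.rpow_pos_of_pos hy p
  rcases le_or_gt (x ^ p) (y ^ p) with h | h
  · nlinarith
  · nlinarith

lemma pm_nonneg (hc0 : 0 ≤ c) (hc1 : c ≤ 1) (t : ℕ) : 0 ≤ powerMeanFn p c t := by
  rw [powerMeanFn]
  split
  · exact le_refl 0
  · split
    · have : (0:ℝ) ≤ (t:ℝ) := by positivity
      positivity
    · apply Real.rpow_nonneg
      exact inside_nonneg hc0 hc1 (by positivity) (by positivity)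

/-- homogeneity of the power mean -/
lemma homog (hp0 : p ≠ 0) (hc0 : 0 ≤ c) (hc1 : c ≤ 1) {x y l : ℝ}
    (hx : 0 ≤ x) (hy : 0 ≤ y) (hl : 0 < l) :
    (c * (l * x) ^ p + (1 - c) * (l * y) ^ p) ^ (1/p) =
      l * (c * x ^ p + (1 - c) * y ^ p) ^ (1/p) := by
  rw [Real.mul_rpow hl.le hx, Real.mul_rpow hl.le hy]
  have e1 : c * (l ^ p * x ^ p) + (1 - c) * (l ^ p * y ^ p) =
      l ^ p * (c * x ^ p + (1 - c) * y ^ p) := by ring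
  rw [e1, Real.mul_rpow (Real.rpow_nonneg hl.le p) (inside_nonneg hc0 hc1 hx hy)]
  congr 1
  rw [← Real.rpow_mul hl.le, mul_one_div_cancel hp0, Real.rpow_one]

/-- representation `f t = (t+1) * (c (t/(t+1))^p + (1-c))^(1/p)` -/
lemma repMean (hp0 : p ≠ 0) (hc0 : 0 ≤ c) (hc1 : c ≤ 1) {T : ℝ} (hT : 0 ≤ T) :
    (c * T ^ p + (1 - c) * (T + 1) ^ p) ^ (1/p) =
      (T + 1) * (c * (T / (T + 1)) ^ p + (1 - c) * 1 ^ p) ^ (1/p) := by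
  have hT1 : (0:ℝ) < T + 1 := by linarith
  have h := homog hp0 hc0 hc1 (x := T / (T + 1)) (y := 1) (l := T + 1)
    (by positivity) zero_le_one hT1
  rw [← h]
  congr 3
  · field_simp
  · ring

/-- representation `f t = t * (c + (1-c) ((t+1)/t)^p)^(1/p)` for `t > 0` -/
lemma repMean2 (hp0 : p ≠ 0) (hc0 : 0 ≤ c) (hc1 : c ≤ 1) {T : ℝ} (hT : 0 < T) :
    (c * T ^ p + (1 - c) * (T + 1) ^ p) ^ (1/p) =
      T * (c * 1 ^ p + (1 - c) * ((T + 1) / T) ^ p) ^ (1/p) := by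
  have h := homog hp0 hc0 hc1 (x := 1) (y := (T + 1) / T) (l := T)
    zero_le_one (by positivity) hT
  rw [← h]
  congr 3
  · ring
  · field_simp

/-- the sandwich property -/
lemma pm_S (hc0 : 0 ≤ c) (hc1 : c ≤ 1) (t : ℕ) :
    (t : ℝ) ≤ powerMeanFn p c t ∧ powerMeanFn p c t ≤ (t : ℝ) + 1 := by
  set T : ℝ := (t : ℝ) with hTdef
  have hT : 0 ≤ T := by positivity
  have hT1 : (0:ℝ) < T + 1 := by linarith
  rcases lt_trichotomy p 0 with hp | hp | hp
  · -- p < 0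
    rcases Nat.eq_zero_or_pos t with ht | ht
    · subst ht
      rw [pm_def_zero hp.le]
      constructor
      · norm_num [hTdef]
      · norm_num [hTdef]
    · have hTpos : 0 < T := by
        rw [hTdef]; exact_mod_cast ht
      rw [pm_def_mean hp.ne (by omega) c]
      have hTp := Real.rpow_pos_of_pos hTpos p
      have hT1p := Real.rpow_pos_of_pos hT1 p
      have hm : (T + 1) ^ p ≤ T ^ p :=
        Real.rpow_le_rpow_of_nonpos hTpos (by linarith) hp.le
      have e1 : (T + 1) ^ p ≤ c * T ^ p + (1 - c) * (T + 1) ^ p := by nlinarith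
      have e2 : c * T ^ p + (1 - c) * (T + 1) ^ p ≤ T ^ p := by nlinarith
      have hipos : 0 < c * T ^ p + (1 - c) * (T + 1) ^ p := by linarith
      have hTid : (T ^ p) ^ (1/p) = T := by
        rw [← Real.rpow_mul hTpos.le, mul_one_div_cancel hp.ne, Real.rpow_one]
      have hT1id : ((T + 1) ^ p) ^ (1/p) = T + 1 := by
        rw [← Real.rpow_mul hT1.le, mul_one_div_cancel hp.ne, Real.rpow_one]
      constructor
      · calc T = (T ^ p) ^ (1/p) := hTid.symm
        _ ≤ (c * T ^ p + (1 - c) * (T + 1) ^ p) ^ (1/p) :=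
            Real.rpow_le_rpow_of_nonpos hipos e2 (by
              apply div_nonpos_of_nonneg_of_nonpos <;> linarith)
      · calc (c * T ^ p + (1 - c) * (T + 1) ^ p) ^ (1/p)
            ≤ ((T + 1) ^ p) ^ (1/p) :=
            Real.rpow_le_rpow_of_nonpos hT1p e1 (by
              apply div_nonpos_of_nonneg_of_nonpos <;> linarith)
        _ = T + 1 := hT1id
  · -- p = 0
    subst hp
    rcases Nat.eq_zero_or_pos t with ht | ht
    · subst ht
      rw [pm_def_zero le_rfl]
      norm_num [hTdef]
    · have hTpos : 0 < T := by rw [hTdef]; exact_mod_cast ht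
      rw [pm_def_geo c (by omega)]
      constructor
      · have e : T ^ c * T ^ (1 - c) = T := by
          rw [← Real.rpow_add hTpos]
          norm_num
        calc T = T ^ c * T ^ (1 - c) := e.symm
        _ ≤ T ^ c * (T + 1) ^ (1 - c) := by
            apply mul_le_mul_of_nonneg_left
            · exact Real.rpow_le_rpow hTpos.le (by linarith) (by linarith)
            · exact Real.rpow_nonneg hTpos.le c
      · have e : (T + 1) ^ c * (T + 1) ^ (1 - c) = T + 1 := by
          rw [← Real.rpow_add hT1]
          norm_num
        calc T ^ c * (T + 1) ^ (1 - c) ≤ (T + 1) ^ c * (T + 1) ^ (1 - c) := by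
              apply mul_le_mul_of_nonneg_right
              · exact Real.rpow_le_rpow hTpos.le (by linarith) hc0
              · exact Real.rpow_nonneg hT1.le (1 - c)
        _ = T + 1 := e
  · -- p > 0
    rw [pm_def_mean hp.ne' (by intro h; exact absurd h.1 (not_le.mpr hp)) c]
    have hm : T ^ p ≤ (T + 1) ^ p := Real.rpow_le_rpow hT (by linarith) hp.le
    have hTp := Real.rpow_nonneg hT p
    have e1 : T ^ p ≤ c * T ^ p + (1 - c) * (T + 1) ^ p := by nlinarith
    have e2 : c * T ^ p + (1 - c) * (T + 1) ^ p ≤ (T + 1) ^ p := by nlinarith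
    have hTid : (T ^ p) ^ (1/p) = T := by
      rw [← Real.rpow_mul hT, mul_one_div_cancel hp.ne', Real.rpow_one]
    have hT1id : ((T + 1) ^ p) ^ (1/p) = T + 1 := by
      rw [← Real.rpow_mul hT1.le, mul_one_div_cancel hp.ne', Real.rpow_one]
    constructor
    · calc T = (T ^ p) ^ (1/p) := hTid.symm
      _ ≤ (c * T ^ p + (1 - c) * (T + 1) ^ p) ^ (1/p) :=
          Real.rpow_le_rpow hTp e1 (by positivity)
    · calc (c * T ^ p + (1 - c) * (T + 1) ^ p) ^ (1/p)
          ≤ ((T + 1) ^ p) ^ (1/p) :=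
          Real.rpow_le_rpow (le_trans hTp e1) e2 (by positivity)
      _ = T + 1 := hT1id

/-- P1: `f t / (t+1)` is nondecreasing -/
lemma pm_P1 (hc0 : 0 ≤ c) (hc1 : c ≤ 1) (a b : ℕ) (hab : a ≤ b) :
    powerMeanFn p c a * ((b:ℝ) + 1) ≤ powerMeanFn p c b * ((a:ℝ) + 1) := by
  set A : ℝ := (a : ℝ) with hA
  set B : ℝ := (b : ℝ) with hB
  have hA0 : 0 ≤ A := by positivity
  have hB0 : 0 ≤ B := by positivity
  have hAB : A ≤ B := by rw [hA, hB]; exact_mod_cast hab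
  have hA1 : (0:ℝ) < A + 1 := by linarith
  have hB1 : (0:ℝ) < B + 1 := by linarith
  have hxAB : A / (A + 1) ≤ B / (B + 1) := by
    rw [div_le_div_iff₀ hA1 hB1]
    nlinarith
  have hxA0 : 0 ≤ A / (A + 1) := by positivity
  have hxB0 : 0 ≤ B / (B + 1) := by positivity
  rcases lt_trichotomy p 0 with hp | hp | hp
  · -- p < 0
    rcases Nat.eq_zero_or_pos a with ha | ha
    · subst ha
      rw [pm_def_zero hp.le]
      simp only [zero_mul]
      have := pm_nonneg (p := p) hc0 hc1 b
      nlinarith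
    · have hb : 0 < b := lt_of_lt_of_le ha hab
      have hApos : 0 < A := by rw [hA]; exact_mod_cast ha
      have hBpos : 0 < B := by rw [hB]; exact_mod_cast hb
      have hxA : 0 < A / (A + 1) := by positivity
      have hxB : 0 < B / (B + 1) := by positivity
      rw [pm_def_mean hp.ne (by omega) c, pm_def_mean hp.ne (by omega) c,
        repMean hp.ne hc0 hc1 hA0, repMean hp.ne hc0 hc1 hB0]
      have hin : c * (B / (B + 1)) ^ p + (1 - c) * 1 ^ p ≤
          c * (A / (A + 1)) ^ p + (1 - c) * 1 ^ p := by
        have := Real.rpow_le_rpow_of_nonpos hxA hxAB hp.le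
        nlinarith
      have hinB : 0 < c * (B / (B + 1)) ^ p + (1 - c) * 1 ^ p :=
        inside_pos hc0 hc1 hxB one_pos
      have hout : (c * (A / (A + 1)) ^ p + (1 - c) * 1 ^ p) ^ (1/p) ≤
          (c * (B / (B + 1)) ^ p + (1 - c) * 1 ^ p) ^ (1/p) :=
        Real.rpow_le_rpow_of_nonpos hinB hin
          (div_nonpos_of_nonneg_of_nonpos zero_le_one hp.le)
      have h1 : 0 ≤ (c * (A / (A + 1)) ^ p + (1 - c) * 1 ^ p) ^ (1/p) :=
        Real.rpow_nonneg (inside_nonneg hc0 hc1 hxA0 zero_le_one) _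
      nlinarith [mul_le_mul_of_nonneg_left hout
        (show (0:ℝ) ≤ (A + 1) * (B + 1) by positivity)]
  · -- p = 0
    subst hp
    rcases Nat.eq_zero_or_pos a with ha | ha
    · subst ha
      rw [pm_def_zero le_rfl]
      simp only [zero_mul]
      have := pm_nonneg (p := (0:ℝ)) hc0 hc1 b
      nlinarith
    · have hb : 0 < b := lt_of_lt_of_le ha hab
      have hApos : 0 < A := by rw [hA]; exact_mod_cast ha
      have hBpos : 0 < B := by rw [hB]; exact_mod_cast hb
      rw [pm_def_geo c (by omega), pm_def_geo c (by omega)]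
      have repA : A ^ c * (A + 1) ^ (1 - c) = (A + 1) * (A / (A + 1)) ^ c := by
        rw [Real.div_rpow hApos.le hA1.le, Real.rpow_sub hA1, Real.rpow_one]
        field_simp
      have repB : B ^ c * (B + 1) ^ (1 - c) = (B + 1) * (B / (B + 1)) ^ c := by
        rw [Real.div_rpow hBpos.le hB1.le, Real.rpow_sub hB1, Real.rpow_one]
        field_simp
      rw [repA, repB]
      have hx : (A / (A + 1)) ^ c ≤ (B / (B + 1)) ^ c :=
        Real.rpow_le_rpow hxA0 hxAB hc0
      have h0 : 0 ≤ (A / (A + 1)) ^ c := Real.rpow_nonneg hxA0 c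
      nlinarith [mul_le_mul_of_nonneg_left hx
        (show (0:ℝ) ≤ (A + 1) * (B + 1) by positivity)]
  · -- p > 0
    rw [pm_def_mean hp.ne' (by intro h; exact absurd h.1 (not_le.mpr hp)) c,
      pm_def_mean hp.ne' (by intro h; exact absurd h.1 (not_le.mpr hp)) c,
      repMean hp.ne' hc0 hc1 hA0, repMean hp.ne' hc0 hc1 hB0]
    have hin : c * (A / (A + 1)) ^ p + (1 - c) * 1 ^ p ≤
        c * (B / (B + 1)) ^ p + (1 - c) * 1 ^ p := by
      have := Real.rpow_le_rpow hxA0 hxAB hp.le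
      nlinarith
    have hout : (c * (A / (A + 1)) ^ p + (1 - c) * 1 ^ p) ^ (1/p) ≤
        (c * (B / (B + 1)) ^ p + (1 - c) * 1 ^ p) ^ (1/p) :=
      Real.rpow_le_rpow (inside_nonneg hc0 hc1 hxA0 zero_le_one) hin (by positivity)
    have h1 : 0 ≤ (c * (A / (A + 1)) ^ p + (1 - c) * 1 ^ p) ^ (1/p) :=
      Real.rpow_nonneg (inside_nonneg hc0 hc1 hxA0 zero_le_one) _
    nlinarith [mul_le_mul_of_nonneg_left hout
      (show (0:ℝ) ≤ (A + 1) * (B + 1) by positivity)]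

/-- P2: `f t / t` is nonincreasing (for `t ≥ 1`) -/
lemma pm_P2 (hc0 : 0 ≤ c) (hc1 : c ≤ 1) (a b : ℕ) (ha : 1 ≤ a) (hab : a ≤ b) :
    powerMeanFn p c b * (a:ℝ) ≤ powerMeanFn p c a * (b:ℝ) := by
  set A : ℝ := (a : ℝ) with hA
  set B : ℝ := (b : ℝ) with hB
  have hApos : 0 < A := by rw [hA]; exact_mod_cast ha
  have hBpos : 0 < B := by rw [hB]; exact_mod_cast lt_of_lt_of_le ha hab
  have hAB : A ≤ B := by rw [hA, hB]; exact_mod_cast hab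
  have hA1 : (0:ℝ) < A + 1 := by linarith
  have hB1 : (0:ℝ) < B + 1 := by linarith
  have hyA : 0 < (A + 1) / A := by positivity
  have hyB : 0 < (B + 1) / B := by positivity
  have hyBA : (B + 1) / B ≤ (A + 1) / A := by
    rw [div_le_div_iff₀ hBpos hApos]
    nlinarith
  rcases lt_trichotomy p 0 with hp | hp | hp
  · -- p < 0
    rw [pm_def_mean hp.ne (by omega) c, pm_def_mean hp.ne (by omega) c,
      repMean2 hp.ne hc0 hc1 hApos, repMean2 hp.ne hc0 hc1 hBpos]
    have hin : c * 1 ^ p + (1 - c) * ((A + 1) / A) ^ p ≤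
        c * 1 ^ p + (1 - c) * ((B + 1) / B) ^ p := by
      have := Real.rpow_le_rpow_of_nonpos hyB hyBA hp.le
      nlinarith
    have hinA : 0 < c * 1 ^ p + (1 - c) * ((A + 1) / A) ^ p :=
      inside_pos hc0 hc1 one_pos hyA
    have hout : (c * 1 ^ p + (1 - c) * ((B + 1) / B) ^ p) ^ (1/p) ≤
        (c * 1 ^ p + (1 - c) * ((A + 1) / A) ^ p) ^ (1/p) :=
      Real.rpow_le_rpow_of_nonpos hinA hin
        (div_nonpos_of_nonneg_of_nonpos zero_le_one hp.le)
    have h1 : 0 ≤ (c * 1 ^ p + (1 - c) * ((B + 1) / B) ^ p) ^ (1/p) :=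
      Real.rpow_nonneg (inside_nonneg hc0 hc1 zero_le_one hyB.le) _
    nlinarith [mul_le_mul_of_nonneg_left hout
      (show (0:ℝ) ≤ A * B by positivity)]
  · -- p = 0
    subst hp
    rw [pm_def_geo c (by omega), pm_def_geo c (by omega)]
    have repA : A ^ c * (A + 1) ^ (1 - c) = A * ((A + 1) / A) ^ (1 - c) := by
      rw [Real.div_rpow hA1.le hApos.le, Real.rpow_sub hApos, Real.rpow_one]
      field_simp
    have repB : B ^ c * (B + 1) ^ (1 - c) = B * ((B + 1) / B) ^ (1 - c) := by
      rw [Real.div_rpow hB1.le hBpos.le, Real.rpow_sub hBpos, Real.rpow_one]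
      field_simp
    rw [repA, repB]
    have hy : ((B + 1) / B) ^ (1 - c) ≤ ((A + 1) / A) ^ (1 - c) :=
      Real.rpow_le_rpow hyB.le hyBA (by linarith)
    have h0 : 0 ≤ ((B + 1) / B) ^ (1 - c) := Real.rpow_nonneg hyB.le _
    nlinarith [mul_le_mul_of_nonneg_left hy
      (show (0:ℝ) ≤ A * B by positivity)]
  · -- p > 0
    rw [pm_def_mean hp.ne' (by intro h; exact absurd h.1 (not_le.mpr hp)) c,
      pm_def_mean hp.ne' (by intro h; exact absurd h.1 (not_le.mpr hp)) c,
      repMean2 hp.ne' hc0 hc1 hApos, repMean2 hp.ne' hc0 hc1 hBpos]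
    have hin : c * 1 ^ p + (1 - c) * ((B + 1) / B) ^ p ≤
        c * 1 ^ p + (1 - c) * ((A + 1) / A) ^ p := by
      have := Real.rpow_le_rpow hyB.le hyBA hp.le
      nlinarith
    have hout : (c * 1 ^ p + (1 - c) * ((B + 1) / B) ^ p) ^ (1/p) ≤
        (c * 1 ^ p + (1 - c) * ((A + 1) / A) ^ p) ^ (1/p) :=
      Real.rpow_le_rpow (inside_nonneg hc0 hc1 zero_le_one hyB.le) hin (by positivity)
    have h1 : 0 ≤ (c * 1 ^ p + (1 - c) * ((B + 1) / B) ^ p) ^ (1/p) :=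
      Real.rpow_nonneg (inside_nonneg hc0 hc1 zero_le_one hyB.le) _
    nlinarith [mul_le_mul_of_nonneg_left hout
      (show (0:ℝ) ≤ A * B by positivity)]

end pm
end WWEF1aux

namespace WWEF1aux

section process
variable {n m : ℕ}

/-- the state of the process after `k` picks -/
noncomputable def st (u : Fin n → Fin m → ℝ) (π : List (Fin n)) (k : ℕ) :
    Finset (Fin m) × (Fin n → Finset (Fin m)) :=
  (π.take k).foldl (pickStep u) (Finset.univ, fun _ => ∅)

/-- the agent picking at turn `k` -/
def ag (π : List (Fin n)) (i₀ : Fin n) (k : ℕ) : Fin n := π.getD k i₀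

/-- the item picked at turn `k` -/
noncomputable def pk (u : Fin n → Fin m → ℝ) (π : List (Fin n)) (i₀ : Fin n)
    (hm : 0 < m) (k : ℕ) : Fin m :=
  (favorite (u (ag π i₀ k)) (st u π k).1).getD ⟨0, hm⟩

lemma favorite_spec {v : Fin m → ℝ} {R : Finset (Fin m)} (h : R.Nonempty) :
    ∃ g, favorite v R = some g ∧ g ∈ R ∧ ∀ x ∈ R, v x ≤ v g := by
  obtain ⟨b, hb, hbmax⟩ := Finset.exists_max_image R v h
  have hne : (R.filter fun j => ∀ j' ∈ R, v j' ≤ v j).Nonempty :=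
    ⟨b, Finset.mem_filter.mpr ⟨hb, hbmax⟩⟩
  refine ⟨(R.filter fun j => ∀ j' ∈ R, v j' ≤ v j).min' hne, ?_, ?_, ?_⟩
  · rw [favorite, dif_pos hne]
  · have := Finset.min'_mem _ hne
    exact (Finset.mem_filter.mp this).1
  · have := Finset.min'_mem _ hne
    exact (Finset.mem_filter.mp this).2

lemma pickStep_some {u : Fin n → Fin m → ℝ} {s : Finset (Fin m) × (Fin n → Finset (Fin m))}
    {a : Fin n} {g : Fin m} (h : favorite (u a) s.1 = some g) :
    pickStep u s a = (s.1.erase g, Function.update s.2 a (insert g (s.2 a))) := by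
  rw [pickStep, h]

lemma st_zero (u : Fin n → Fin m → ℝ) (π : List (Fin n)) :
    st u π 0 = (Finset.univ, fun _ => ∅) := by
  rw [st, List.take_zero, List.foldl_nil]

lemma st_succ (u : Fin n → Fin m → ℝ) (π : List (Fin n)) (i₀ : Fin n) {k : ℕ}
    (hk : k < π.length) :
    st u π (k + 1) = pickStep u (st u π k) (ag π i₀ k) := by
  rw [st, st, List.take_succ, List.foldl_append]
  congr 1
  have h1 : π[k]? = some (π.get ⟨k, hk⟩) := by
    rw [List.getElem?_eq_getElem hk]
    rfl
  rw [h1]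
  have h2 : ag π i₀ k = π.get ⟨k, hk⟩ := by
    rw [ag, List.getD_eq_getElem?_getD, List.getElem?_eq_getElem hk]
    rfl
  rw [h2]
  rfl

lemma ag_get (π : List (Fin n)) (i₀ : Fin n) {x : ℕ} (hx : x < π.length) :
    ag π i₀ x = π.get ⟨x, hx⟩ := by
  rw [ag, List.getD_eq_getElem?_getD, List.getElem?_eq_getElem hx]
  rfl

section facts
variable (u : Fin n → Fin m → ℝ) (π : List (Fin n)) (i₀ : Fin n)
  (hm : 0 < m) (hlen : π.length = m)

include i₀ hm hlen

lemma st_card : ∀ k, k ≤ m → ((st u π k).1.card = m - k) := by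
  intro k
  induction k with
  | zero => intro _; rw [st_zero]; simp
  | succ k ih =>
    intro hk1
    have hk : k < m := by omega
    have hcard := ih (by omega)
    have hne : (st u π k).1.Nonempty := by
      rw [← Finset.card_pos, hcard]; omega
    obtain ⟨g, hg, hgmem, _⟩ := favorite_spec (v := u (ag π i₀ k)) hne
    rw [st_succ u π i₀ (by omega : k < π.length), pickStep_some hg]
    simp only
    rw [Finset.card_erase_of_mem hgmem, hcard]
    omega

lemma pk_fav {k : ℕ} (hk : k < m) :
    favorite (u (ag π i₀ k)) (st u π k).1 = some (pk u π i₀ hm k) := by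
  have hne : (st u π k).1.Nonempty := by
    rw [← Finset.card_pos, st_card u π i₀ hm hlen k (by omega)]; omega
  obtain ⟨g, hg, _, _⟩ := favorite_spec (v := u (ag π i₀ k)) hne
  rw [pk, hg]
  rfl

lemma pk_mem {k : ℕ} (hk : k < m) : pk u π i₀ hm k ∈ (st u π k).1 := by
  have hne : (st u π k).1.Nonempty := by
    rw [← Finset.card_pos, st_card u π i₀ hm hlen k (by omega)]; omega
  obtain ⟨g, hg, hmem, _⟩ := favorite_spec (v := u (ag π i₀ k)) hne
  have := pk_fav u π i₀ hm hlen hk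
  rw [hg] at this
  rw [← Option.some_inj.mp this]
  exact hmem

lemma pk_max {k : ℕ} (hk : k < m) :
    ∀ x ∈ (st u π k).1, u (ag π i₀ k) x ≤ u (ag π i₀ k) (pk u π i₀ hm k) := by
  have hne : (st u π k).1.Nonempty := by
    rw [← Finset.card_pos, st_card u π i₀ hm hlen k (by omega)]; omega
  obtain ⟨g, hg, hmem, hmax⟩ := favorite_spec (v := u (ag π i₀ k)) hne
  have := pk_fav u π i₀ hm hlen hk
  rw [hg] at this
  rw [← Option.some_inj.mp this]
  exact hmax

lemma st_succ' {k : ℕ} (hk : k < m) :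
    st u π (k + 1) = ((st u π k).1.erase (pk u π i₀ hm k),
      Function.update (st u π k).2 (ag π i₀ k)
        (insert (pk u π i₀ hm k) ((st u π k).2 (ag π i₀ k)))) := by
  rw [st_succ u π i₀ (by omega : k < π.length), pickStep_some (pk_fav u π i₀ hm hlen hk)]

lemma st_anti : ∀ k k' : ℕ, k ≤ k' → k' ≤ m → (st u π k').1 ⊆ (st u π k).1 := by
  intro k k' hkk' hk'
  induction k', hkk' using Nat.le_induction with
  | base => exact subset_rfl
  | succ k' hkk' ih =>
    have h1 := ih (by omega)
    rw [st_succ' u π i₀ hm hlen (by omega : k' < m)]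
    exact subset_trans (Finset.erase_subset _ _) h1

lemma pk_greedy {k k' : ℕ} (hkk' : k ≤ k') (hk' : k' < m) :
    u (ag π i₀ k) (pk u π i₀ hm k') ≤ u (ag π i₀ k) (pk u π i₀ hm k) := by
  apply pk_max u π i₀ hm hlen (by omega)
  exact st_anti u π i₀ hm hlen k k' hkk' (by omega) (pk_mem u π i₀ hm hlen hk')

lemma pk_inj {k k' : ℕ} (hkk' : k < k') (hk' : k' < m) :
    pk u π i₀ hm k ≠ pk u π i₀ hm k' := by
  have h1 : pk u π i₀ hm k' ∈ (st u π (k + 1)).1 :=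
    st_anti u π i₀ hm hlen (k + 1) k' (by omega) (by omega) (pk_mem u π i₀ hm hlen hk')
  rw [st_succ' u π i₀ hm hlen (by omega : k < m)] at h1
  exact (Finset.ne_of_mem_erase h1).symm

lemma st_bundle : ∀ k, k ≤ m → ∀ a : Fin n,
    (st u π k).2 a = ((range k).filter (fun x => ag π i₀ x = a)).image (pk u π i₀ hm) := by
  intro k
  induction k with
  | zero => intro _ a; rw [st_zero]; simp
  | succ k ih =>
    intro hk1 a
    have hk : k < m := by omega
    rw [st_succ' u π i₀ hm hlen hk, Finset.range_add_one, Finset.filter_insert]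
    by_cases ha : ag π i₀ k = a
    · subst ha
      simp only
      rw [Function.update_self, if_pos trivial, Finset.image_insert, ih (by omega)]
    · simp only
      rw [Function.update_of_ne (by exact fun h => ha (by rw [← h])) _ _, if_neg ha,
        ih (by omega)]

lemma allocate_eq (a : Fin n) :
    allocate u π a = ((range m).filter (fun x => ag π i₀ x = a)).image (pk u π i₀ hm) := by
  have h1 : allocate u π a = (st u π m).2 a := by
    rw [allocate, st, List.take_of_length_le (le_of_eq hlen)]
  rw [h1, st_bundle u π i₀ hm hlen m (le_refl m)]

lemma count_take (a : Fin n) : ∀ k, k ≤ m →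
    (π.take k).count a = ((range k).filter (fun x => ag π i₀ x = a)).card := by
  intro k
  induction k with
  | zero => intro _; simp
  | succ k ih =>
    intro hk1
    have hk : k < π.length := by omega
    rw [List.take_succ, List.getElem?_eq_getElem hk, List.count_append]
    rw [Finset.range_add_one, Finset.filter_insert]
    have hag : ag π i₀ k = π[k] := by
      rw [ag, List.getD_eq_getElem?_getD, List.getElem?_eq_getElem hk]
      rfl
    by_cases ha : ag π i₀ k = a
    · rw [if_pos ha, Finset.card_insert_of_notMem (by simp), ← ih (by omega)]
      have : π[k] = a := by rw [← hag, ha]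
      simp [Option.toList, List.count_singleton', this]
    · rw [if_neg ha, ← ih (by omega)]
      have : π[k] ≠ a := by rw [← hag]; exact ha
      simp [Option.toList, List.count_singleton', this]

end facts

/-- downward-closed subsets of `Fin k` -/
lemma dc_iff {k : ℕ} (D : Finset (Fin k))
    (hD : ∀ r r' : Fin k, r ≤ r' → r' ∈ D → r ∈ D) (r : Fin k) :
    ((r : ℕ) < D.card ↔ r ∈ D) := by
  constructor
  · intro h
    by_contra hr
    have hsub : D ⊆ Finset.Iio r := by
      intro x hx
      rw [Finset.mem_Iio]
      by_contra hxr
      push_neg at hxr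
      exact hr (hD r x hxr hx)
    have := Finset.card_le_card hsub
    rw [Fin.card_Iio] at this
    omega
  · intro h
    have hsub : Finset.Iic r ⊆ D := by
      intro x hx
      exact hD x r (Finset.mem_Iic.mp hx) h
    have := Finset.card_le_card hsub
    rw [Fin.card_Iic] at this
    omega

lemma image_orderEmb (T : Finset ℕ) {k : ℕ} (h : T.card = k) :
    Finset.univ.image (T.orderEmbOfFin h) = T := by
  ext y
  simp only [Finset.mem_image, Finset.mem_univ, true_and]
  constructor
  · rintro ⟨r, rfl⟩
    exact Finset.orderEmbOfFin_mem T h r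
  · intro hy
    have := Finset.range_orderEmbOfFin T h
    have hy' : y ∈ Set.range (T.orderEmbOfFin h) := by
      rw [this]; exact_mod_cast hy
    obtain ⟨r, hr⟩ := hy'
    exact ⟨r, hr⟩

lemma filter_lt_card_iff (T : Finset ℕ) {k : ℕ} (h : T.card = k) (x : ℕ) (r : Fin k) :
    ((r : ℕ) < (T.filter (· < x)).card ↔ T.orderEmbOfFin h r < x) := by
  set e := T.orderEmbOfFin h with he
  set D := Finset.univ.filter (fun r : Fin k => e r < x) with hD
  have himg : T.filter (· < x) = D.image e := by
    ext y
    simp only [Finset.mem_filter, Finset.mem_image, hD, Finset.mem_univ, true_and]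
    constructor
    · rintro ⟨hyT, hyx⟩
      have : y ∈ Finset.univ.image e := by rw [image_orderEmb T h]; exact hyT
      obtain ⟨r', _, hr'⟩ := Finset.mem_image.mp this
      exact ⟨r', by rw [hr']; exact hyx, hr'⟩
    · rintro ⟨r', hr'x, rfl⟩
      exact ⟨Finset.orderEmbOfFin_mem T h r', hr'x⟩
  have hcard : (T.filter (· < x)).card = D.card := by
    rw [himg, Finset.card_image_of_injective _ (T.orderEmbOfFin h).injective]
  rw [hcard]
  have hdc : ∀ r r' : Fin k, r ≤ r' → r' ∈ D → r ∈ D := by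
    intro a b hab hb
    rw [hD, Finset.mem_filter] at hb ⊢
    refine ⟨Finset.mem_univ _, ?_⟩
    calc e a ≤ e b := e.monotone hab
    _ < x := hb.2
  rw [dc_iff D hdc r]
  simp [hD]

lemma rank_eq (T : Finset ℕ) {k : ℕ} (h : T.card = k) (r : Fin k) :
    (T.filter (· < T.orderEmbOfFin h r)).card = (r : ℕ) := by
  set e := T.orderEmbOfFin h
  have h1 : ¬ ((r : ℕ) < (T.filter (· < e r)).card) := by
    rw [filter_lt_card_iff T h (e r) r]
    exact lt_irrefl _
  push_neg at h1
  by_contra hne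
  have hlt : (T.filter (· < e r)).card < (r : ℕ) := by omega
  have hcardk : (T.filter (· < e r)).card < k := by
    have : (r : ℕ) < k := r.isLt
    omega
  set r' : Fin k := ⟨(T.filter (· < e r)).card, hcardk⟩ with hr'
  have := (filter_lt_card_iff T h (e r) r').not
  simp only [hr'] at this
  have h2 : ¬ ((r' : ℕ) < (T.filter (· < e r)).card) := by
    simp [hr']
  rw [filter_lt_card_iff T h (e r) r'] at h2
  have h3 : e r' < e r := by
    apply (T.orderEmbOfFin h).strictMono
    simp only [hr', Fin.mk_lt_mk]
    exact hlt
  exact h2 h3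

end process
end WWEF1aux

namespace WWEF1aux

/-- Main per-pair lemma. -/
lemma main {n m : ℕ} (hm : 0 < m) (f : ℕ → ℝ)
    (hS : ∀ t : ℕ, (t : ℝ) ≤ f t ∧ f t ≤ t + 1)
    (hP1 : ∀ a b : ℕ, a ≤ b → f a * ((b:ℝ) + 1) ≤ f b * ((a:ℝ) + 1))
    (hP2 : ∀ a b : ℕ, 1 ≤ a → a ≤ b → f b * (a:ℝ) ≤ f a * (b:ℝ))
    (w : Fin n → ℝ) (hw : ∀ a, 0 < w a)
    (π : List (Fin n)) (hπ : π.length = m) (hseq : IsDivisorSeq f w π)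
    (u : Fin n → Fin m → ℝ) (hu : ∀ a x, 0 ≤ u a x)
    (i j : Fin n) (hij : i ≠ j) :
    ∃ B ⊆ allocate u π j, B.card ≤ 1 ∧
      ((∑ x ∈ allocate u π j \ B, u i x) / w j ≤ (∑ x ∈ allocate u π i, u i x) / w i ∨
       (∑ x ∈ allocate u π j, u i x) / w j ≤ (∑ x ∈ allocate u π i ∪ B, u i x) / w i) := by
  classical
  set Tj : Finset ℕ := (range m).filter (fun x => ag π i x = j) with hTj
  set Ti : Finset ℕ := (range m).filter (fun x => ag π i x = i) with hTi
  have hMj : allocate u π j = Tj.image (pk u π i hm) := allocate_eq u π i hm hπ j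
  have hMi : allocate u π i = Ti.image (pk u π i hm) := allocate_eq u π i hm hπ i
  have hTjm : ∀ x ∈ Tj, x < m := fun x hx => mem_range.mp (mem_filter.mp hx).1
  have hTim : ∀ x ∈ Ti, x < m := fun x hx => mem_range.mp (mem_filter.mp hx).1
  have hTjag : ∀ x ∈ Tj, ag π i x = j := fun x hx => (mem_filter.mp hx).2
  have hTiag : ∀ x ∈ Ti, ag π i x = i := fun x hx => (mem_filter.mp hx).2
  set ej := Tj.orderEmbOfFin rfl with hej
  set ei := Ti.orderEmbOfFin rfl with hei
  have hejmem : ∀ r : Fin Tj.card, ej r ∈ Tj := fun r => Finset.orderEmbOfFin_mem _ _ r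
  have heimem : ∀ q : Fin Ti.card, ei q ∈ Ti := fun q => Finset.orderEmbOfFin_mem _ _ q
  set dN : ℕ → ℝ := fun r =>
    if h : r < Tj.card then u i (pk u π i hm (ej ⟨r, h⟩)) else 0 with hdN
  set aN : ℕ → ℝ := fun q =>
    if h : q < Ti.card then u i (pk u π i hm (ei ⟨q, h⟩)) else 0 with haN
  set tN : ℕ → ℕ := fun r =>
    if h : r < Tj.card then (Ti.filter (· < ej ⟨r, h⟩)).card else 0 with htN
  -- sums over the bundles
  have hpkinj : ∀ T : Finset ℕ, (∀ x ∈ T, x < m) →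
      ∀ x ∈ T, ∀ y ∈ T, pk u π i hm x = pk u π i hm y → x = y := by
    intro T hTm x hx y hy hxy
    rcases lt_trichotomy x y with h | h | h
    · exact absurd hxy (pk_inj u π i hm hπ h (hTm y hy))
    · exact h
    · exact absurd hxy.symm (pk_inj u π i hm hπ h (hTm x hx))
  have hsumgen : ∀ (T : Finset ℕ) (hTm : ∀ x ∈ T, x < m),
      ∑ x ∈ T.image (pk u π i hm), u i x = ∑ r : Fin T.card, u i (pk u π i hm
        (T.orderEmbOfFin rfl r)) := by
    intro T hTm
    rw [Finset.sum_image (hpkinj T hTm)]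
    rw [← image_orderEmb T rfl, Finset.sum_image (by
      intro x _ y _ hxy
      exact (T.orderEmbOfFin rfl).injective hxy)]
    rw [image_orderEmb T rfl]
  have hsumj : ∑ x ∈ allocate u π j, u i x = ∑ r ∈ range Tj.card, dN r := by
    rw [hMj, hsumgen Tj hTjm, ← Fin.sum_univ_eq_sum_range]
    apply Finset.sum_congr rfl
    intro r _
    rw [hdN]
    simp only
    rw [dif_pos r.isLt]
  have hsumi : ∑ x ∈ allocate u π i, u i x = ∑ q ∈ range Ti.card, aN q := by
    rw [hMi, hsumgen Ti hTim, ← Fin.sum_univ_eq_sum_range]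
    apply Finset.sum_congr rfl
    intro q _
    rw [haN]
    simp only
    rw [dif_pos q.isLt]
  have hMisum_nonneg : 0 ≤ ∑ x ∈ allocate u π i, u i x :=
    Finset.sum_nonneg (fun x _ => hu i x)
  -- trivial case: j picked nothing
  rcases Nat.eq_zero_or_pos Tj.card with hk0 | hk0
  · refine ⟨∅, Finset.empty_subset _, by simp, Or.inl ?_⟩
    rw [Finset.sdiff_empty, hMj, Finset.card_eq_zero.mp hk0]
    simp only [Finset.image_empty, Finset.sum_empty, zero_div]
    exact div_nonneg hMisum_nonneg (hw i).le
  -- hypotheses of the core lemmas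
  have ha0 : ∀ q, 0 ≤ aN q := by
    intro q
    rw [haN]
    simp only
    split
    · exact hu i _
    · exact le_refl 0
  have hts : ∀ r < Tj.card, tN r ≤ Ti.card := by
    intro r hr
    rw [htN]
    simp only
    rw [dif_pos hr]
    exact Finset.card_filter_le _ _
  have ham : ∀ q q' : ℕ, q ≤ q' → q' < Ti.card → aN q' ≤ aN q := by
    intro q q' hqq' hq'
    have hq : q < Ti.card := by omega
    rw [haN]
    simp only
    rw [dif_pos hq, dif_pos hq']
    have h1 : ei ⟨q, hq⟩ ≤ ei ⟨q', hq'⟩ := (Ti.orderEmbOfFin rfl).monotone (by simpa using hqq')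
    have h2 := pk_greedy u π i hm hπ h1 (hTim _ (heimem ⟨q', hq'⟩))
    rwa [hTiag _ (heimem ⟨q, hq⟩)] at h2
  have hda : ∀ r < Tj.card, ∀ q < tN r, dN r ≤ aN q := by
    intro r hr q hq
    rw [htN] at hq
    simp only at hq
    rw [dif_pos hr] at hq
    have hqs : q < Ti.card := lt_of_lt_of_le hq (Finset.card_filter_le _ _)
    have hlt : ei ⟨q, hqs⟩ < ej ⟨r, hr⟩ :=
      (filter_lt_card_iff Ti rfl (ej ⟨r, hr⟩) ⟨q, hqs⟩).mp hq
    rw [hdN, haN]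
    simp only
    rw [dif_pos hr, dif_pos hqs]
    have h2 := pk_greedy u π i hm hπ hlt.le (hTjm _ (hejmem ⟨r, hr⟩))
    rwa [hTiag _ (heimem ⟨q, hqs⟩)] at h2
  have hdiv : ∀ r < Tj.card, f r * w i ≤ f (tN r) * w j := by
    intro r hr
    set κ := ej ⟨r, hr⟩ with hκdef
    have hκm : κ < m := hTjm _ (hejmem ⟨r, hr⟩)
    have hκ : κ < π.length := by omega
    have hgetj : π.get ⟨κ, hκ⟩ = j := by
      rw [← ag_get π i hκ]
      exact hTjag _ (hejmem ⟨r, hr⟩)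
    have hfilter : ∀ a : Fin n, ((range κ).filter (fun x => ag π i x = a)) =
        ((range m).filter (fun x => ag π i x = a)).filter (· < κ) := by
      intro a
      ext x
      simp only [Finset.mem_filter, Finset.mem_range]
      constructor
      · rintro ⟨h1, h2⟩; exact ⟨⟨by omega, h2⟩, h1⟩
      · rintro ⟨⟨h1, h2⟩, h3⟩; exact ⟨h3, h2⟩
    have hcntj : (π.take κ).count j = r := by
      rw [count_take π i hm hπ j κ (by omega), hfilter j, ← hTj, hκdef, rank_eq Tj rfl]
    have hcnti : (π.take κ).count i = tN r := by
      rw [count_take π i hm hπ i κ (by omega), hfilter i, ← hTi, htN]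
      simp only
      rw [dif_pos hr]
    have h := (hseq κ hκ i).1
    rw [hgetj, hcntj, hcnti] at h
    exact (div_le_div_iff₀ (hw j) (hw i)).mp h
  -- two cases according to the weights
  rcases le_total (w i) (w j) with hle | hle
  · -- use the second disjunct, adding i's favorite item of M j
    have hMjne : (allocate u π j).Nonempty := by
      rw [hMj]
      exact Finset.Nonempty.image (Finset.card_pos.mp hk0) _
    obtain ⟨b, hbmem, hbmax⟩ := Finset.exists_max_image _ (u i) hMjne
    have hbMi : b ∉ allocate u π i := by
      intro hbi
      rw [hMj] at hbmem
      rw [hMi] at hbi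
      obtain ⟨x, hx, hxb⟩ := Finset.mem_image.mp hbmem
      obtain ⟨y, hy, hyb⟩ := Finset.mem_image.mp hbi
      have hxy : x ≠ y := by
        intro h
        apply hij
        rw [← hTiag y hy, ← h, hTjag x hx]
      have := hpkinj (Tj ∪ Ti) (by
        intro z hz
        rcases Finset.mem_union.mp hz with h | h
        · exact hTjm z h
        · exact hTim z h) x (Finset.mem_union_left _ hx) y (Finset.mem_union_right _ hy)
        (by rw [hxb, hyb])
      exact hxy this
    have hdm : ∀ r < Tj.card, dN r ≤ u i b := by
      intro r hr
      rw [hdN]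
      simp only
      rw [dif_pos hr]
      apply hbmax
      rw [hMj]
      exact Finset.mem_image_of_mem _ (hejmem ⟨r, hr⟩)
    have hcore := core1 hS hP1 (hw i) (hw j) hle Ti.card Tj.card aN ha0 ham dN tN hts hda
      hdiv (u i b) hdm (hu i b)
    refine ⟨{b}, Finset.singleton_subset_iff.mpr hbmem, by simp, Or.inr ?_⟩
    have hunion : allocate u π i ∪ {b} = insert b (allocate u π i) := by
      rw [Finset.union_comm, ← Finset.insert_eq]
    rw [hunion, Finset.sum_insert hbMi, hsumj, hsumi]
    calc (∑ r ∈ range Tj.card, dN r) / w j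
        ≤ ((∑ q ∈ range Ti.card, aN q) + u i b) / w i := hcore
    _ = (u i b + ∑ q ∈ range Ti.card, aN q) / w i := by rw [add_comm]
  · -- use the first disjunct, removing j's first pick
    set g0 := pk u π i hm (ej ⟨0, hk0⟩) with hg0def
    have hg0mem : g0 ∈ allocate u π j := by
      rw [hMj]
      exact Finset.mem_image_of_mem _ (hejmem ⟨0, hk0⟩)
    have hcore := core2 hS hP1 hP2 (hw i) (hw j) hle Ti.card Tj.card aN ha0 ham dN tN hts hda
      hdiv
    refine ⟨{g0}, Finset.singleton_subset_iff.mpr hg0mem, by simp, Or.inl ?_⟩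
    have hsd : allocate u π j \ {g0} = (allocate u π j).erase g0 :=
      Finset.sdiff_singleton_eq_erase _ _
    have hsplit : ∑ x ∈ (allocate u π j).erase g0, u i x =
        (∑ x ∈ allocate u π j, u i x) - u i g0 := by
      have := Finset.sum_erase_add (allocate u π j) (u i) hg0mem
      linarith
    have hd0 : dN 0 = u i g0 := by
      rw [hdN]
      simp only
      rw [dif_pos hk0]
    have hIco : ∑ r ∈ range Tj.card, dN r = dN 0 + ∑ r ∈ Finset.Ico 1 Tj.card, dN r := by
      rw [Finset.range_eq_Ico, Finset.sum_eq_sum_Ico_succ_bot hk0]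
    rw [hsd, hsplit, hsumj, hsumi, hIco, hd0]
    have : u i g0 + (∑ r ∈ Finset.Ico 1 Tj.card, dN r) - u i g0 =
        ∑ r ∈ Finset.Ico 1 Tj.card, dN r := by ring
    rw [this]
    exact hcore

end WWEF1aux


/-- All weighted power-mean divisor methods satisfy WWEF1: for every
`p ∈ ℝ` and `c ∈ [0,1]`, the divisor method with function `powerMeanFn p c` produces a
WWEF1 allocation for every instance. -/
theorem weighted_power_mean_WWEF1 (p c : ℝ) (hc : c ∈ Set.Icc (0 : ℝ) 1) :
    ∀ (n m : ℕ) (w : Fin n → ℝ), (∀ i, 0 < w i) →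
      ∀ π : List (Fin n), π.length = m → IsDivisorSeq (powerMeanFn p c) w π →
      ∀ u : Fin n → Fin m → ℝ, (∀ i j, 0 ≤ u i j) →
        isWWEF1 w u (allocate u π) := by
  obtain ⟨hc0, hc1⟩ := hc
  intro n m w hw π hπ hseq u hu i j
  by_cases hij : i = j
  · subst hij
    refine ⟨∅, Finset.empty_subset _, by simp, Or.inl ?_⟩
    rw [Finset.sdiff_empty]
  rcases Nat.eq_zero_or_pos m with hm0 | hm
  · subst hm0
    refine ⟨∅, Finset.empty_subset _, by simp, Or.inl ?_⟩
    have h1 : allocate u π j = ∅ := Finset.eq_empty_of_isEmpty _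
    have h2 : allocate u π i = ∅ := Finset.eq_empty_of_isEmpty _
    rw [Finset.sdiff_empty, h1, h2]
    simp
  · exact WWEF1aux.main hm (powerMeanFn p c)
      (fun t => WWEF1aux.pm_S hc0 hc1 t)
      (fun a b hab => WWEF1aux.pm_P1 hc0 hc1 a b hab)
      (fun a b ha hab => WWEF1aux.pm_P2 hc0 hc1 a b ha hab)
      w hw π hπ hseq u hu i j hij
end

section
/- Let π be a picking sequence on n agents and m items such that every prefix of π satisfies lower quota, i.e., for every prefix of length k and every agent i, the number t_i of agent i's picks in the prefix satisfies t_i ≥ ⌊(w_i · k) / Σ_{i'∈N} w_{i'}⌋. Then π satisfies weighted proportionality up to one item (WPROP1): for every profile of additive utilities, the allocation it produces is WPROP1. -/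
/-!
Fix an agent `i`, let `W = ∑ w`, and let `ν` bound `u_i` on the items `i` does not receive.
Before turn `k`, let `a_k` be the minimum of `ν` and the largest value to `i` of a remaining
item; it is nonincreasing in `k`. An item taken in turn `k` by another agent is worth at most
`a_k` to `i`, and the item `i` takes herself is worth at least `a_k`. Hence
`w_i · u_i(M) - W · u_i(M_i) ≤ ∑_k (w_i - W · [π_k = i]) · a_k`. The partial sums of these
coefficients are `w_i · k - W · t_i(k)`, which lower quota keeps below `W`, so Abel summation
bounds the right-hand side by `W · a_0 ≤ W · ν`. Taking for `ν` the value of the best item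
outside `M_i` gives WPROP1.
-/

open Finset

/-- Weighted proportionality up to one item. -/
def isWPROP1 {n m : ℕ} (w : Fin n → ℝ) (u : Fin n → Fin m → ℝ)
    (M : Fin n → Finset (Fin m)) : Prop :=
  ∀ i : Fin n, ∃ B ⊆ Finset.univ \ M i, B.card ≤ 1 ∧
    w i / (∑ i', w i') * (∑ x, u i x) - (∑ x ∈ B, u i x) ≤ ∑ x ∈ M i, u i x


theorem sum_mul_le_of_antitone_of_sum_le {d a : ℕ → ℝ} {C : ℝ} {N : ℕ} (ha : Antitone a)
    (haN : 0 ≤ a N) (hd : ∀ K ≤ N, ∑ k ∈ range K, d k ≤ C) :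
    ∑ k ∈ range N, d k * a k ≤ C * a 0 := by
  have key : ∀ K ≤ N, ∑ k ∈ range K, d k * a k + (C - ∑ k ∈ range K, d k) * a K ≤ C * a 0 := by
    intro K
    induction K with
    | zero => intro _; simp
    | succ K ih =>
      intro hK
      have hstep := mul_le_mul_of_nonneg_left (ha K.le_succ) (sub_nonneg.2 (hd _ hK))
      simp only [sum_range_succ] at hstep ⊢
      linarith [ih (by omega)]
  linarith [key N le_rfl, mul_nonneg (sub_nonneg.2 (hd N le_rfl)) haN]

theorem lt_mul_add_one_of_floor_div_le {x W : ℝ} {c : ℤ} (hW : 0 < W) (h : ⌊x / W⌋ ≤ c) :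
    x < W * (c + 1) := by
  rw [Int.floor_le_iff, div_lt_iff₀ hW] at h
  linarith

theorem List.count_take_add_one {α : Type*} [DecidableEq α] {l : List α} {k : ℕ}
    (hk : k < l.length) (a : α) :
    (l.take (k + 1)).count a = (l.take k).count a + if l[k] = a then 1 else 0 := by
  rw [List.take_add_one, List.getElem?_eq_getElem hk, Option.toList_some, List.count_append,
    List.count_singleton]
  simp

section MaxVal

variable {α : Type*} (u : α → ℝ)

noncomputable def maxVal (R : Finset α) : ℝ :=
  (insert 0 (R.image u)).max' (insert_nonempty _ _)

theorem maxVal_nonneg (R : Finset α) : 0 ≤ maxVal u R :=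
  le_max' _ _ (mem_insert_self _ _)

theorem le_maxVal {R : Finset α} {x : α} (hx : x ∈ R) : u x ≤ maxVal u R :=
  le_max' _ _ (mem_insert_of_mem (mem_image_of_mem _ hx))

theorem maxVal_le {R : Finset α} {b : ℝ} (h0 : 0 ≤ b) (h : ∀ x ∈ R, u x ≤ b) :
    maxVal u R ≤ b :=
  max'_le _ _ _ <| by simpa [forall_mem_image] using And.intro h0 h

theorem maxVal_mono : Monotone (maxVal u) := fun _ S hRS =>
  maxVal_le u (maxVal_nonneg u S) fun _ hx => le_maxVal u (hRS hx)

theorem exists_subset_card_le_one_forall_le_sum (R : Finset α) :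
    ∃ B ⊆ R, #B ≤ 1 ∧ ∀ x ∈ R, u x ≤ ∑ y ∈ B, u y := by
  rcases R.eq_empty_or_nonempty with rfl | hR
  · exact ⟨∅, subset_refl _, by simp, by simp⟩
  · obtain ⟨b, hb, hmax⟩ := R.exists_max_image u hR
    exact ⟨{b}, singleton_subset_iff.2 hb, by simp, by simpa using hmax⟩

end MaxVal

section Picking

variable {n m : ℕ}

theorem favorite_eq_some {v : Fin m → ℝ} {R : Finset (Fin m)} {j : Fin m}
    (h : favorite v R = some j) : j ∈ R ∧ ∀ j' ∈ R, v j' ≤ v j := by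
  unfold favorite at h
  split_ifs at h with hne
  cases h
  exact mem_filter.1 (min'_mem _ hne)

theorem exists_favorite_eq_some {v : Fin m → ℝ} {R : Finset (Fin m)} (hR : R.Nonempty) :
    ∃ j, favorite v R = some j := by
  obtain ⟨b, hb, hmax⟩ := R.exists_max_image v hR
  exact ⟨_, dif_pos ⟨b, mem_filter.2 ⟨hb, hmax⟩⟩⟩

variable (u : Fin n → Fin m → ℝ)

theorem pickStep_cases (st : Finset (Fin m) × (Fin n → Finset (Fin m))) (a : Fin n) :
    pickStep u st a = st ∨ ∃ j ∈ st.1, (∀ j' ∈ st.1, u a j' ≤ u a j) ∧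
      pickStep u st a = (st.1.erase j, Function.update st.2 a (insert j (st.2 a))) := by
  rcases h : favorite (u a) st.1 with _ | j
  · exact Or.inl (by rw [pickStep, h])
  · exact Or.inr ⟨j, (favorite_eq_some h).1, (favorite_eq_some h).2, by rw [pickStep, h]⟩

theorem pickStep_of_nonempty {st : Finset (Fin m) × (Fin n → Finset (Fin m))} (a : Fin n)
    (hne : st.1.Nonempty) : ∃ j ∈ st.1, (∀ j' ∈ st.1, u a j' ≤ u a j) ∧
      pickStep u st a = (st.1.erase j, Function.update st.2 a (insert j (st.2 a))) := by
  obtain ⟨j, h⟩ := exists_favorite_eq_some (v := u a) hne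
  exact ⟨j, (favorite_eq_some h).1, (favorite_eq_some h).2, by rw [pickStep, h]⟩

theorem pickStep_fst_subset (st : Finset (Fin m) × (Fin n → Finset (Fin m))) (a : Fin n) :
    (pickStep u st a).1 ⊆ st.1 := by
  rcases pickStep_cases u st a with h | ⟨j, -, -, h⟩ <;> rw [h]
  exact erase_subset _ _

theorem pickStep_snd_union_fst_subset (st : Finset (Fin m) × (Fin n → Finset (Fin m)))
    (a b : Fin n) : (pickStep u st a).2 b ∪ (pickStep u st a).1 ⊆ st.2 b ∪ st.1 := by
  rcases pickStep_cases u st a with h | ⟨j, hj, -, h⟩ <;> rw [h]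
  intro x
  by_cases hb : b = a
  · subst hb
    simp only [Function.update_self, mem_union, mem_insert, mem_erase]
    rintro ((rfl | hx) | ⟨-, hx⟩) <;> simp [*]
  · simp only [Function.update_of_ne hb, mem_union, mem_erase]
    tauto

theorem disjoint_pickStep {st : Finset (Fin m) × (Fin n → Finset (Fin m))} (a : Fin n)
    {b : Fin n} (h : Disjoint (st.2 b) st.1) :
    Disjoint ((pickStep u st a).2 b) (pickStep u st a).1 := by
  rcases pickStep_cases u st a with hst | ⟨j, -, -, hst⟩ <;> rw [hst]
  · exact h
  dsimp only
  by_cases hb : b = a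
  · subst hb
    rw [Function.update_self, disjoint_insert_left]
    exact ⟨notMem_erase _ _, h.mono_right (erase_subset _ _)⟩
  · rw [Function.update_of_ne hb]
    exact h.mono_right (erase_subset _ _)

theorem card_pickStep_fst {st : Finset (Fin m) × (Fin n → Finset (Fin m))} (a : Fin n)
    (hne : st.1.Nonempty) : #(pickStep u st a).1 = #st.1 - 1 := by
  obtain ⟨j, hj, -, h⟩ := pickStep_of_nonempty u a hne
  rw [h, card_erase_of_mem hj]

end Picking

section Deficit

variable {n m : ℕ}

noncomputable def shareDeficit (c W : ℝ) (v : Fin m → ℝ) (R M : Finset (Fin m)) : ℝ :=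
  c * ∑ x ∈ univ \ R, v x - W * ∑ x ∈ M, v x

theorem shareDeficit_pickStep_sub_le (u : Fin n → Fin m → ℝ)
    {st : Finset (Fin m) × (Fin n → Finset (Fin m))} {i a : Fin n} {c W ν : ℝ}
    (hc : 0 ≤ c) (hcW : c ≤ W) (hu : ∀ x, 0 ≤ u i x) (hne : st.1.Nonempty)
    (hdisj : Disjoint (st.2 i) st.1)
    (hν : ∀ x ∉ (pickStep u st a).2 i ∪ (pickStep u st a).1, u i x ≤ ν) :
    shareDeficit c W (u i) (pickStep u st a).1 ((pickStep u st a).2 i)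
        - shareDeficit c W (u i) st.1 (st.2 i)
      ≤ (c - if a = i then W else 0) * min (maxVal (u i) st.1) ν := by
  obtain ⟨j, hj, hjmax, h⟩ := pickStep_of_nonempty u a hne
  have hjM : j ∉ st.2 i := disjoint_right.1 hdisj hj
  have htaken : ∑ x ∈ univ \ st.1.erase j, u i x = u i j + ∑ x ∈ univ \ st.1, u i x := by
    rw [sdiff_erase (mem_univ j), sum_insert (by simp [hj])]
  rw [h] at hν ⊢
  dsimp only [shareDeficit] at hν ⊢
  rw [htaken]
  by_cases ha : a = i
  · subst ha
    have hjmin : min (maxVal (u a) st.1) ν ≤ u a j :=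
      (min_le_left _ _).trans (maxVal_le _ (hu j) hjmax)
    rw [Function.update_self, sum_insert hjM, if_pos rfl]
    linarith [mul_le_mul_of_nonneg_left hjmin (sub_nonneg.2 hcW)]
  · have hjν : u i j ≤ ν := hν j (by simp [Function.update_of_ne (Ne.symm ha), hjM])
    have hjmin : u i j ≤ min (maxVal (u i) st.1) ν := le_min (le_maxVal _ hj) hjν
    rw [Function.update_of_ne (Ne.symm ha), if_neg ha]
    linarith [mul_le_mul_of_nonneg_left hjmin hc]

end Deficit

section PickState

variable {n m : ℕ} (u : Fin n → Fin m → ℝ) (π : List (Fin n))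

noncomputable def pickState (k : ℕ) : Finset (Fin m) × (Fin n → Finset (Fin m)) :=
  (π.take k).foldl (pickStep u) (univ, fun _ => ∅)

theorem pickState_succ {k : ℕ} (hk : k < π.length) :
    pickState u π (k + 1) = pickStep u (pickState u π k) π[k] := by
  rw [pickState, pickState, List.take_add_one, List.getElem?_eq_getElem hk, Option.toList_some,
    List.foldl_append, List.foldl_cons, List.foldl_nil]

theorem pickState_succ_of_length_le {k : ℕ} (hk : π.length ≤ k) :
    pickState u π (k + 1) = pickState u π k := by
  rw [pickState, pickState, List.take_of_length_le hk, List.take_of_length_le (by omega)]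

theorem pickState_succ_cases (k : ℕ) :
    pickState u π (k + 1) = pickState u π k ∨
      ∃ a, pickState u π (k + 1) = pickStep u (pickState u π k) a := by
  rcases lt_or_ge k π.length with hk | hk
  · exact Or.inr ⟨_, pickState_succ u π hk⟩
  · exact Or.inl (pickState_succ_of_length_le u π hk)

theorem allocate_eq_pickState : allocate u π = (pickState u π π.length).2 := by
  rw [allocate, pickState, List.take_length]

theorem antitone_pickState_fst : Antitone fun k => (pickState u π k).1 :=
  antitone_nat_of_succ_le fun k => by
    rcases pickState_succ_cases u π k with h | ⟨a, h⟩ <;> rw [h]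
    exact pickStep_fst_subset u _ a

theorem antitone_pickState_snd_union_fst (b : Fin n) :
    Antitone fun k => (pickState u π k).2 b ∪ (pickState u π k).1 :=
  antitone_nat_of_succ_le fun k => by
    rcases pickState_succ_cases u π k with h | ⟨a, h⟩ <;> rw [h]
    exact pickStep_snd_union_fst_subset u _ a b

theorem disjoint_pickState (k : ℕ) (b : Fin n) :
    Disjoint ((pickState u π k).2 b) (pickState u π k).1 := by
  induction k with
  | zero => simp [pickState]
  | succ k ih =>
    rcases pickState_succ_cases u π k with h | ⟨a, h⟩ <;> rw [h]
    exacts [ih, disjoint_pickStep u a ih]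

theorem card_pickState_fst (hπ : π.length ≤ m) {k : ℕ} (hk : k ≤ π.length) :
    #(pickState u π k).1 = m - k := by
  induction k with
  | zero => simp [pickState]
  | succ k ih =>
    have hcard := ih (by omega)
    rw [pickState_succ u π (by omega), card_pickStep_fst u _ (card_pos.1 (by omega)), hcard]
    omega

end PickState

section LowerQuota

variable {n m : ℕ}

def LowerQuota (w : Fin n → ℝ) (π : List (Fin n)) : Prop :=
  ∀ k ≤ π.length, ∀ i, ⌊w i * k / ∑ i', w i'⌋ ≤ ((π.take k).count i : ℤ)

theorem LowerQuota.sum_mul_le {w : Fin n → ℝ} {π : List (Fin n)} (hq : LowerQuota w π)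
    (hW : 0 < ∑ j, w j) (i : Fin n) {a : ℕ → ℝ} (ha : Antitone a) (ha0 : ∀ k, 0 ≤ a k) :
    ∑ k ∈ range π.length,
        (w i - (∑ j, w j) * (((π.take (k + 1)).count i : ℝ) - (π.take k).count i)) * a k
      ≤ (∑ j, w j) * a 0 := by
  refine sum_mul_le_of_antitone_of_sum_le ha (ha0 _) fun K hK => ?_
  rw [sum_sub_distrib, ← mul_sum, sum_range_sub (fun k => ((π.take k).count i : ℝ)), sum_const,
    card_range, nsmul_eq_mul]
  have := lt_mul_add_one_of_floor_div_le hW (hq K hK i)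
  push_cast at this ⊢
  simp only [List.take_zero, List.count_nil, CharP.cast_eq_zero, sub_zero]
  linarith

theorem shareDeficit_pickState_succ_sub_le (u : Fin n → Fin m → ℝ) {π : List (Fin n)}
    (hπ : π.length ≤ m) {k : ℕ} (hk : k < π.length) {i : Fin n} {c W ν : ℝ} (hc : 0 ≤ c)
    (hcW : c ≤ W) (hu : ∀ x, 0 ≤ u i x) (hν : ∀ x ∉ allocate u π i, u i x ≤ ν) :
    shareDeficit c W (u i) (pickState u π (k + 1)).1 ((pickState u π (k + 1)).2 i)
        - shareDeficit c W (u i) (pickState u π k).1 ((pickState u π k).2 i)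
      ≤ (c - if π[k] = i then W else 0) * min (maxVal (u i) (pickState u π k).1) ν := by
  have hne : (pickState u π k).1.Nonempty := by
    rw [← card_pos, card_pickState_fst u π hπ hk.le]
    omega
  rw [pickState_succ u π hk]
  refine shareDeficit_pickStep_sub_le u hc hcW hu hne (disjoint_pickState u π k i)
    fun x hx => hν x fun hxM => hx ?_
  rw [← pickState_succ u π hk]
  rw [allocate_eq_pickState] at hxM
  exact antitone_pickState_snd_union_fst u π i hk (mem_union_left _ hxM)

theorem mul_sum_le_of_lowerQuota (u : Fin n → Fin m → ℝ) {w : Fin n → ℝ} {π : List (Fin n)}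
    (hw : ∀ j, 0 ≤ w j) (hW : 0 < ∑ j, w j) (hπ : π.length = m) (hq : LowerQuota w π)
    (i : Fin n) (hu : ∀ x, 0 ≤ u i x) {ν : ℝ} (hν0 : 0 ≤ ν)
    (hν : ∀ x ∉ allocate u π i, u i x ≤ ν) :
    w i * ∑ x, u i x ≤ (∑ j, w j) * (∑ x ∈ allocate u π i, u i x + ν) := by
  set W := ∑ j, w j
  let a (k : ℕ) : ℝ := min (maxVal (u i) (pickState u π k).1) ν
  let Φ (k : ℕ) : ℝ := shareDeficit (w i) W (u i) (pickState u π k).1 ((pickState u π k).2 i)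
  have hstep : ∀ k ∈ range π.length, Φ (k + 1) - Φ k
      ≤ (w i - W * (((π.take (k + 1)).count i : ℝ) - (π.take k).count i)) * a k := by
    intro k hk
    have hk : k < π.length := mem_range.1 hk
    have hcount : W * (((π.take (k + 1)).count i : ℝ) - (π.take k).count i)
        = if π[k] = i then W else 0 := by
      rw [List.count_take_add_one hk]
      split_ifs <;> push_cast <;> ring
    rw [hcount]
    exact shareDeficit_pickState_succ_sub_le u hπ.le hk (hw i)
      (single_le_sum (fun j _ => hw j) (mem_univ i)) hu hν
  have habel := hq.sum_mul_le hW i (a := a)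
    (fun k l hkl => min_le_min_right ν (maxVal_mono _ (antitone_pickState_fst u π hkl)))
    fun k => le_min (maxVal_nonneg _ _) hν0
  have hΦ0 : Φ 0 = 0 := by simp [Φ, shareDeficit, pickState]
  have hΦ : Φ π.length = w i * ∑ x, u i x - W * ∑ x ∈ allocate u π i, u i x := by
    have hR : (pickState u π π.length).1 = ∅ := card_eq_zero.1 (by
      rw [card_pickState_fst u π hπ.le le_rfl]; omega)
    simp only [Φ, shareDeficit, allocate_eq_pickState, hR, sdiff_empty]
  have := (sum_le_sum hstep).trans habel
  rw [sum_range_sub, hΦ0, hΦ] at this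
  linarith [mul_le_mul_of_nonneg_left (min_le_right _ ν : a 0 ≤ ν) hW.le]

end LowerQuota

/-- If every prefix of a picking sequence `π` satisfies lower quota
(for every prefix of length `k` and every agent `i`, the number of agent `i`'s picks
in the prefix is at least `⌊w_i · k / Σ_{i'} w_{i'}⌋`), then `π` satisfies WPROP1. -/
theorem lower_quota_implies_WPROP1
    (n m : ℕ) (w : Fin n → ℝ) (hw : ∀ i, 0 < w i)
    (π : List (Fin n)) (hlen : π.length = m)
    (hquota : ∀ (k : ℕ), k ≤ m → ∀ i : Fin n,
      ⌊w i * k / ∑ i', w i'⌋ ≤ ((π.take k).count i : ℤ)) :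
    ∀ u : Fin n → Fin m → ℝ, (∀ i j, 0 ≤ u i j) →
      isWPROP1 w u (allocate u π) := by
  intro u hu i
  have hW : 0 < ∑ j, w j := sum_pos (fun j _ => hw j) ⟨i, mem_univ i⟩
  have hq : LowerQuota w π := by subst hlen; exact hquota
  obtain ⟨B, hB, hBcard, hBmax⟩ :=
    exists_subset_card_le_one_forall_le_sum (u i) (univ \ allocate u π i)
  refine ⟨B, hB, hBcard, ?_⟩
  have key := mul_sum_le_of_lowerQuota u (fun j => (hw j).le) hW hlen hq i (hu i)
    (sum_nonneg fun x _ => hu i x) fun x hx => hBmax x (by simpa using hx)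
  rw [sub_le_iff_le_add, div_mul_eq_mul_div, div_le_iff₀ hW]
  linarith
end

section
/- The quota method does not satisfy population-monotonicity: there exist an instance (agents with weights and additive utilities over a set of items) and an additional agent with a weight and utilities such that some original agent receives strictly more utility from the allocation produced by the quota method after the new agent is added than before. In addition, the quota method does not satisfy weight-monotonicity even with three agents: there exist an instance with three agents and an increase of agent 1's weight such that agent 1 receives strictly less utility from the allocation produced by the quota method with the increased weight than with the original weight. -/
open Finset

/-- `π` is the picking sequence induced by the quota method with weights `w`:
in round `k+1` (0-indexed position `k`), among the eligible agents
(those with `t_i < w_i·(k+1)/Σ w`), the pick goes to an agent minimizing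
`(t_i + 1)/w_i`, ties broken toward lower-numbered agents. -/
def IsQuotaSeq {n : ℕ} (w : Fin n → ℝ) (π : List (Fin n)) : Prop :=
  ∀ (k : ℕ) (hk : k < π.length),
    (((π.take k).count (π.get ⟨k, hk⟩) : ℝ) <
        w (π.get ⟨k, hk⟩) * (k + 1) / ∑ i', w i') ∧
    ∀ i : Fin n, ((π.take k).count i : ℝ) < w i * (k + 1) / ∑ i', w i' →
      (((π.take k).count (π.get ⟨k, hk⟩) : ℝ) + 1) / w (π.get ⟨k, hk⟩) ≤
          (((π.take k).count i : ℝ) + 1) / w i ∧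
      (i < π.get ⟨k, hk⟩ →
        (((π.take k).count (π.get ⟨k, hk⟩) : ℝ) + 1) / w (π.get ⟨k, hk⟩) <
          (((π.take k).count i : ℝ) + 1) / w i)

/-!
Both failures are witnessed by small explicit instances. Picking depends only on how each agent
orders the items, so real utilities that are casts of natural numbers can be replaced by the
natural numbers themselves; the quota conditions, cleared of denominators, are statements about
natural numbers too. Both the allocations and the quota sequences are then checked by evaluation.
-/

section Picking

variable {α β : Type*} [LinearOrder α] [LinearOrder β] {n m : ℕ}

def favoriteBy (u : Fin m → α) (R : Finset (Fin m)) : Option (Fin m) :=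
  if h : (R.filter fun j => ∀ j' ∈ R, u j' ≤ u j).Nonempty then
    some ((R.filter fun j => ∀ j' ∈ R, u j' ≤ u j).min' h)
  else none

def pickStepBy (u : Fin n → Fin m → α) (st : Finset (Fin m) × (Fin n → Finset (Fin m)))
    (a : Fin n) : Finset (Fin m) × (Fin n → Finset (Fin m)) :=
  match favoriteBy (u a) st.1 with
  | none => st
  | some j => (st.1.erase j, Function.update st.2 a (insert j (st.2 a)))

def allocateBy (u : Fin n → Fin m → α) (π : List (Fin n)) : Fin n → Finset (Fin m) :=
  (π.foldl (pickStepBy u) (Finset.univ, fun _ => ∅)).2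

theorem favoriteBy_comp {f : α → β} (hf : StrictMono f) (u : Fin m → α) (R : Finset (Fin m)) :
    favoriteBy (fun j => f (u j)) R = favoriteBy u R := by
  simp only [favoriteBy, hf.le_iff_le]

theorem pickStepBy_comp {f : α → β} (hf : StrictMono f) (u : Fin n → Fin m → α) :
    pickStepBy (fun a j => f (u a j)) = pickStepBy u := by
  funext st a
  rw [pickStepBy, favoriteBy_comp hf, pickStepBy]

theorem allocateBy_comp {f : α → β} (hf : StrictMono f) (u : Fin n → Fin m → α)
    (π : List (Fin n)) : allocateBy (fun a j => f (u a j)) π = allocateBy u π := by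
  rw [allocateBy, pickStepBy_comp hf, allocateBy]

end Picking

-- `allocate` is `allocateBy` at `ℝ` definitionally.
theorem allocate_natCast {n m : ℕ} (u : Fin n → Fin m → ℕ) (π : List (Fin n)) :
    allocate (fun a j => (u a j : ℝ)) π = allocateBy u π :=
  allocateBy_comp Nat.strictMono_cast u π

def IsQuotaSeqNat {n : ℕ} (w : Fin n → ℕ) (π : List (Fin n)) : Prop :=
  ∀ (k : ℕ) (hk : k < π.length),
    (π.take k).count (π.get ⟨k, hk⟩) * ∑ i', w i' < w (π.get ⟨k, hk⟩) * (k + 1) ∧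
    ∀ i : Fin n, (π.take k).count i * ∑ i', w i' < w i * (k + 1) →
      ((π.take k).count (π.get ⟨k, hk⟩) + 1) * w i ≤
          ((π.take k).count i + 1) * w (π.get ⟨k, hk⟩) ∧
      (i < π.get ⟨k, hk⟩ →
        ((π.take k).count (π.get ⟨k, hk⟩) + 1) * w i <
          ((π.take k).count i + 1) * w (π.get ⟨k, hk⟩))

instance {n : ℕ} (w : Fin n → ℕ) (π : List (Fin n)) : Decidable (IsQuotaSeqNat w π) := by
  unfold IsQuotaSeqNat; infer_instance

theorem IsQuotaSeqNat.isQuotaSeq_natCast {n : ℕ} {w : Fin n → ℕ} (hw : ∀ i, 0 < w i)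
    {π : List (Fin n)} (h : IsQuotaSeqNat w π) : IsQuotaSeq (fun i => (w i : ℝ)) π := by
  intro k hk
  set a := π.get ⟨k, hk⟩
  have hW : (0 : ℝ) < ∑ i, (w i : ℝ) := by
    exact_mod_cast Finset.sum_pos (fun i _ => hw i) ⟨a, mem_univ a⟩
  have eligible_iff (i : Fin n) : ((π.take k).count i : ℝ) < w i * (k + 1) / ∑ i', (w i' : ℝ) ↔
      (π.take k).count i * ∑ i', w i' < w i * (k + 1) := by
    rw [lt_div_iff₀ hW]; exact_mod_cast Iff.rfl
  obtain ⟨ha, hmin⟩ := h k hk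
  refine ⟨(eligible_iff a).2 ha, fun i hi => ?_⟩
  obtain ⟨hle, hlt⟩ := hmin i ((eligible_iff i).1 hi)
  have hwa : (0 : ℝ) < w a := by exact_mod_cast hw a
  have hwi : (0 : ℝ) < w i := by exact_mod_cast hw i
  refine ⟨?_, fun hia => ?_⟩
  · rw [div_le_div_iff₀ hwa hwi]; exact_mod_cast hle
  · rw [div_lt_div_iff₀ hwa hwi]; exact_mod_cast hlt hia

theorem sum_allocate_natCast {n m : ℕ} (u : Fin n → Fin m → ℕ) (π : List (Fin n)) (i : Fin n) :
    ∑ x ∈ allocate (fun a j => (u a j : ℝ)) π i, (u i x : ℝ) =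
      ((∑ x ∈ allocateBy u π i, u i x : ℕ) : ℝ) := by
  rw [allocate_natCast, Nat.cast_sum]

/-- The quota method does not satisfy population-monotonicity:
there is an instance where adding an extra agent strictly increases the utility of
an original agent. Moreover, the quota method does not satisfy weight-monotonicity
even with three agents: there is an instance with three agents where increasing
agent 1's weight strictly decreases agent 1's utility. -/
theorem quota_not_population_monotone_and_not_weight_monotone :
    (∃ (n m : ℕ) (w : Fin (n + 1) → ℝ) (u : Fin (n + 1) → Fin m → ℝ)
       (π : List (Fin n)) (π' : List (Fin (n + 1))) (i : Fin n),
       (∀ j, 0 < w j) ∧ (∀ a b, 0 ≤ u a b) ∧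
       π.length = m ∧ π'.length = m ∧
       IsQuotaSeq (fun j : Fin n => w j.castSucc) π ∧ IsQuotaSeq w π' ∧
       (∑ x ∈ allocate (fun a y => u a.castSucc y) π i, u i.castSucc x) <
         ∑ x ∈ allocate u π' i.castSucc, u i.castSucc x) ∧
    (∃ (m : ℕ) (w w' : Fin 3 → ℝ) (u : Fin 3 → Fin m → ℝ) (π π' : List (Fin 3)),
       (∀ j, 0 < w j) ∧ w 0 < w' 0 ∧ w' 1 = w 1 ∧ w' 2 = w 2 ∧
       (∀ a b, 0 ≤ u a b) ∧
       π.length = m ∧ π'.length = m ∧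
       IsQuotaSeq w π ∧ IsQuotaSeq w' π' ∧
       (∑ x ∈ allocate u π' 0, u 0 x) < ∑ x ∈ allocate u π 0, u 0 x) := by
  constructor
  · -- With weights (1, 4) agent 1 makes all three picks; adding a third agent of weight 1
    -- makes agent 1 ineligible in round 3, which then goes to agent 0 by tie-breaking.
    let w : Fin 3 → ℕ := ![1, 4, 1]
    let u : Fin 3 → Fin 3 → ℕ := ![![1, 1, 1], ![0, 0, 0], ![0, 0, 0]]
    refine ⟨2, 3, fun j => w j, fun a b => u a b, [1, 1, 1], [1, 1, 0], 0,
      fun j => by fin_cases j <;> norm_num [w], fun _ _ => Nat.cast_nonneg _, rfl, rfl,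
      IsQuotaSeqNat.isQuotaSeq_natCast (fun j => by fin_cases j <;> decide) (by decide),
      IsQuotaSeqNat.isQuotaSeq_natCast (fun j => by fin_cases j <;> decide) (by decide), ?_⟩
    rw [sum_allocate_natCast (fun a y => u a.castSucc y), sum_allocate_natCast, Nat.cast_lt]
    decide
  · -- With weight 5 agent 0 picks in rounds 1, 2, 5 instead of 1, 3, 5: taking item 2 early
    -- sends agent 1 to item 4, agent 2 takes item 3, and agent 0 is left with item 0.
    let w : Fin 3 → ℕ := ![4, 2, 2]
    let w' : Fin 3 → ℕ := ![5, 2, 2]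
    let u : Fin 3 → Fin 5 → ℕ := ![![0, 1, 1, 1, 1], ![0, 0, 1, 0, 1], ![0, 0, 0, 1, 0]]
    refine ⟨5, fun j => w j, fun j => w' j, fun a b => u a b, [0, 1, 0, 2, 0], [0, 0, 1, 2, 0],
      fun j => by fin_cases j <;> norm_num [w], by norm_num [w, w'], rfl, rfl,
      fun _ _ => Nat.cast_nonneg _, rfl, rfl,
      IsQuotaSeqNat.isQuotaSeq_natCast (fun j => by fin_cases j <;> decide) (by decide),
      IsQuotaSeqNat.isQuotaSeq_natCast (fun j => by fin_cases j <;> decide) (by decide), ?_⟩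
    rw [sum_allocate_natCast, sum_allocate_natCast, Nat.cast_lt]
    decide +kernel
end

section
/- In the unweighted setting, the maximum Nash welfare (MNW) solution satisfies neither resource-monotonicity nor population-monotonicity. Specifically: (1) there exist two agents with additive utilities over four items such that the allocation maximizing the product of utilities over the first three items is unique, the allocation maximizing the product of utilities over all four items is unique, and agent 1's utility in the latter is strictly smaller than in the former; and (2) there exist three agents with additive utilities over four items such that the product-maximizing allocation among the first two agents is unique, the product-maximizing allocation among all three agents is unique, and agent 1's utility in the latter is strictly larger than in the former. -/
/-!
Both counterexamples have small integer utilities.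

Resource monotonicity: agent 0 values items `0, 1, 2, 3` at `3, 4, 5, 3`, agent 1 at `5, 3, 2, 0`.
On items `{0, 1, 2}` the optimum is `{1, 2} | {0}` with welfare `9 * 5 = 45`; adding item 3,
which only agent 0 wants, makes `{2, 3} | {0, 1}` optimal with welfare `8 * 8 = 64`, so agent 0
drops from 9 to 8.

Population monotonicity: agents 0 and 1 value the items at `2, 3, 1, 5` and `0, 1, 2, 4`, with
optimum `{0, 1} | {2, 3}` of welfare `5 * 6 = 30`. A third agent valuing them at `0, 4, 2, 1`
takes item 1 away from agent 0, and the new optimum `{0, 3} | {2} | {1}` (welfare `7 * 2 * 4 = 56`)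
raises agent 0 from 5 to 7.

Every allocation is induced by an assignment of items to agents, so optimality and uniqueness
reduce to a finite check over the at most `3 ^ 4` assignments, carried out in `ℕ` by `decide`.
-/

open Finset

/-- `M` is an allocation (partition) of the item set `S` among the `n` agents. -/
def IsPartition {n m : ℕ} (M : Fin n → Finset (Fin m)) (S : Finset (Fin m)) : Prop :=
  (∀ i j : Fin n, i ≠ j → Disjoint (M i) (M j)) ∧ Finset.univ.biUnion M = S

variable {n m : ℕ}

def nashWelfare {R : Type*} [CommSemiring R] (u : Fin n → Fin m → R)
    (M : Fin n → Finset (Fin m)) : R :=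
  ∏ i, ∑ x ∈ M i, u i x

lemma nashWelfare_natCast (v : Fin n → Fin m → ℕ) (M : Fin n → Finset (Fin m)) :
    nashWelfare (fun i x => (v i x : ℝ)) M = nashWelfare v M := by
  simp [nashWelfare]

def IsUniqueMNW (u : Fin n → Fin m → ℝ) (S : Finset (Fin m)) (M : Fin n → Finset (Fin m)) :
    Prop :=
  IsPartition M S ∧
    (∀ M', IsPartition M' S → nashWelfare u M' ≤ nashWelfare u M) ∧
    (∀ M', IsPartition M' S → nashWelfare u M' = nashWelfare u M → M' = M)

def allocationOf (S : Finset (Fin m)) (f : Fin m → Fin n) : Fin n → Finset (Fin m) :=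
  fun i => S.filter (f · = i)

lemma IsPartition.exists_eq_allocationOf [NeZero n] {M : Fin n → Finset (Fin m)}
    {S : Finset (Fin m)} (h : IsPartition M S) : ∃ f : Fin m → Fin n, M = allocationOf S f := by
  obtain ⟨hdisj, hcover⟩ := h
  have hmem : ∀ x ∈ S, ∃ i, x ∈ M i := by
    intro x hx
    rw [← hcover] at hx
    simpa using hx
  refine ⟨fun x => if hx : x ∈ S then (hmem x hx).choose else 0, funext fun i => ?_⟩
  ext x
  simp only [allocationOf, mem_filter]
  constructor
  · intro hx
    have hxS : x ∈ S := hcover ▸ mem_biUnion.mpr ⟨i, mem_univ i, hx⟩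
    refine ⟨hxS, ?_⟩
    rw [dif_pos hxS]
    by_contra hne
    exact disjoint_left.mp (hdisj _ _ hne) (hmem x hxS).choose_spec hx
  · rintro ⟨hxS, rfl⟩
    rw [dif_pos hxS]
    exact (hmem x hxS).choose_spec

lemma isUniqueMNW_of_forall_allocationOf [NeZero n] (v : Fin n → Fin m → ℕ) (S : Finset (Fin m))
    (M : Fin n → Finset (Fin m)) (hM : IsPartition M S)
    (h : ∀ f : Fin m → Fin n,
      nashWelfare v (allocationOf S f) < nashWelfare v M ∨ allocationOf S f = M) :
    IsUniqueMNW (fun i x => (v i x : ℝ)) S M := by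
  refine ⟨hM, fun M' hM' => ?_, fun M' hM' heq => ?_⟩
  · obtain ⟨f, rfl⟩ := hM'.exists_eq_allocationOf
    rw [nashWelfare_natCast, nashWelfare_natCast, Nat.cast_le]
    rcases h f with hlt | heq
    · exact hlt.le
    · rw [heq]
  · obtain ⟨f, rfl⟩ := hM'.exists_eq_allocationOf
    rw [nashWelfare_natCast, nashWelfare_natCast, Nat.cast_inj] at heq
    exact (h f).resolve_left heq.not_lt

def resourceUtility : Fin 2 → Fin 4 → ℕ := ![![3, 4, 5, 3], ![5, 3, 2, 0]]

lemma isUniqueMNW_resourceUtility_three :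
    IsUniqueMNW (fun i x => (resourceUtility i x : ℝ)) {0, 1, 2} ![{1, 2}, {0}] :=
  isUniqueMNW_of_forall_allocationOf _ _ _ ⟨by decide, by decide⟩ (by decide)

lemma isUniqueMNW_resourceUtility_four :
    IsUniqueMNW (fun i x => (resourceUtility i x : ℝ)) univ ![{2, 3}, {0, 1}] :=
  isUniqueMNW_of_forall_allocationOf _ _ _ ⟨by decide, by decide⟩ (by decide)

def populationUtility : Fin 3 → Fin 4 → ℕ := ![![2, 3, 1, 5], ![0, 1, 2, 4], ![0, 4, 2, 1]]

lemma isUniqueMNW_populationUtility_two :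
    IsUniqueMNW (fun i x => (populationUtility i.castSucc x : ℝ)) univ ![{0, 1}, {2, 3}] :=
  isUniqueMNW_of_forall_allocationOf (fun i => populationUtility i.castSucc) _ _
    ⟨by decide, by decide⟩ (by decide)

lemma isUniqueMNW_populationUtility_three :
    IsUniqueMNW (fun i x => (populationUtility i x : ℝ)) univ ![{0, 3}, {2}, {1}] :=
  isUniqueMNW_of_forall_allocationOf _ _ _ ⟨by decide, by decide⟩ (by decide)

/-- In the unweighted setting, MNW satisfies neither
resource-monotonicity nor population-monotonicity: (1) there are two agents with
additive utilities over four items such that the unique allocation maximizing the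
product of utilities over the first three items gives agent 1 strictly more utility
than the unique allocation maximizing the product of utilities over all four items;
(2) there are three agents with additive utilities over four items such that agent
1's utility in the unique product-maximizing allocation among all three agents is
strictly larger than in the unique product-maximizing allocation among the first two
agents. -/
theorem MNW_not_resource_monotone_and_not_population_monotone :
    (∃ (u : Fin 2 → Fin 4 → ℝ) (M3 M4 : Fin 2 → Finset (Fin 4)),
       (∀ i j, 0 ≤ u i j) ∧
       IsPartition M3 ({0, 1, 2} : Finset (Fin 4)) ∧
       (∀ M', IsPartition M' ({0, 1, 2} : Finset (Fin 4)) →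
         (∏ i, ∑ x ∈ M' i, u i x) ≤ ∏ i, ∑ x ∈ M3 i, u i x) ∧
       (∀ M', IsPartition M' ({0, 1, 2} : Finset (Fin 4)) →
         (∏ i, ∑ x ∈ M' i, u i x) = (∏ i, ∑ x ∈ M3 i, u i x) → M' = M3) ∧
       IsPartition M4 (Finset.univ : Finset (Fin 4)) ∧
       (∀ M', IsPartition M' (Finset.univ : Finset (Fin 4)) →
         (∏ i, ∑ x ∈ M' i, u i x) ≤ ∏ i, ∑ x ∈ M4 i, u i x) ∧
       (∀ M', IsPartition M' (Finset.univ : Finset (Fin 4)) →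
         (∏ i, ∑ x ∈ M' i, u i x) = (∏ i, ∑ x ∈ M4 i, u i x) → M' = M4) ∧
       (∑ x ∈ M4 0, u 0 x) < ∑ x ∈ M3 0, u 0 x) ∧
    (∃ (u : Fin 3 → Fin 4 → ℝ) (M2 : Fin 2 → Finset (Fin 4)) (M3 : Fin 3 → Finset (Fin 4)),
       (∀ i j, 0 ≤ u i j) ∧
       IsPartition M2 (Finset.univ : Finset (Fin 4)) ∧
       (∀ M', IsPartition M' (Finset.univ : Finset (Fin 4)) →
         (∏ i : Fin 2, ∑ x ∈ M' i, u i.castSucc x) ≤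
           ∏ i : Fin 2, ∑ x ∈ M2 i, u i.castSucc x) ∧
       (∀ M', IsPartition M' (Finset.univ : Finset (Fin 4)) →
         (∏ i : Fin 2, ∑ x ∈ M' i, u i.castSucc x) =
           (∏ i : Fin 2, ∑ x ∈ M2 i, u i.castSucc x) → M' = M2) ∧
       IsPartition M3 (Finset.univ : Finset (Fin 4)) ∧
       (∀ M', IsPartition M' (Finset.univ : Finset (Fin 4)) →
         (∏ i, ∑ x ∈ M' i, u i x) ≤ ∏ i, ∑ x ∈ M3 i, u i x) ∧
       (∀ M', IsPartition M' (Finset.univ : Finset (Fin 4)) →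
         (∏ i, ∑ x ∈ M' i, u i x) = (∏ i, ∑ x ∈ M3 i, u i x) → M' = M3) ∧
       (∑ x ∈ M2 0, u 0 x) < ∑ x ∈ M3 0, u 0 x) := by
  constructor
  · obtain ⟨hM3, hle3, huniq3⟩ := isUniqueMNW_resourceUtility_three
    obtain ⟨hM4, hle4, huniq4⟩ := isUniqueMNW_resourceUtility_four
    refine ⟨_, _, _, fun _ _ => Nat.cast_nonneg _, hM3, hle3, huniq3, hM4, hle4, huniq4, ?_⟩
    simp [resourceUtility]; norm_num
  · obtain ⟨hM2, hle2, huniq2⟩ := isUniqueMNW_populationUtility_two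
    obtain ⟨hM3, hle3, huniq3⟩ := isUniqueMNW_populationUtility_three
    refine ⟨_, _, _, fun _ _ => Nat.cast_nonneg _, hM2, hle2, huniq2, hM3, hle3, huniq3, ?_⟩
    simp [populationUtility]; norm_num
end

section
/- The maximum weighted Nash welfare (MWNW) solution satisfies weight-monotonicity: fix an instance with n agents (weights w_1,...,w_n > 0) and m items with additive utilities in which the maximum weighted Nash welfare is positive, and let w_i' > w_i for some agent i. If M = (M_1,...,M_n) maximizes Π_j u_j(M_j)^{w_j} over all allocations and M' = (M_1',...,M_n') maximizes Π_{j≠i} u_j(M_j')^{w_j} · u_i(M_i')^{w_i'} over all allocations, then u_i(M_i') ≥ u_i(M_i). -/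
open Finset

/-- The weighted Nash welfare of an allocation `M`. -/
noncomputable def WNW {n m : ℕ} (w : Fin n → ℝ) (u : Fin n → Fin m → ℝ)
    (M : Fin n → Finset (Fin m)) : ℝ :=
  ∏ i, (∑ x ∈ M i, u i x) ^ (w i)

/-!
Write `a, a'` for agent `i`'s utility under `M, M'` and `P, P'` for the weighted product of
the other agents' utilities. Optimality of `M` for the weights `w` and of `M'` for the raised
weight `w' > w` of agent `i` give `a' ^ w * P' ≤ a ^ w * P` and `a ^ w' * P ≤ a' ^ w' * P'`.
Multiplying the two and cancelling `P * P'` leaves `(a / a') ^ w' ≤ (a / a') ^ w`, which rules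
out `a' < a`.
-/

theorem le_of_rpow_mul_le_of_rpow_mul_le {a a' P P' w w' : ℝ} (ha' : 0 ≤ a') (hw' : 0 < w')
    (hww' : w < w') (hpos : 0 < a ^ w * P)
    (hle : a' ^ w * P' ≤ a ^ w * P) (hle' : a ^ w' * P ≤ a' ^ w' * P') : a ≤ a' := by
  by_contra! hlt
  have ha : 0 < a := ha'.trans_lt hlt
  have hP : 0 < P := pos_of_mul_pos_right hpos (Real.rpow_nonneg ha.le w)
  have hrhs : 0 < a' ^ w' * P' := (mul_pos (Real.rpow_pos_of_pos ha w') hP).trans_le hle'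
  have hP'pos : 0 < P' := pos_of_mul_pos_right hrhs (Real.rpow_nonneg ha' w')
  have ha'pos : 0 < a' := by
    refine ha'.lt_of_ne fun h => ?_
    rw [← h, Real.zero_rpow hw'.ne', zero_mul] at hrhs
    exact hrhs.false
  have hcross : a' ^ w * a ^ w' ≤ a ^ w * a' ^ w' := by
    have := mul_le_mul hle hle' (by positivity) (by positivity)
    have hPP' : 0 < P * P' := mul_pos hP hP'pos
    nlinarith
  have hratio : (a / a') ^ w' ≤ (a / a') ^ w := by
    rw [Real.div_rpow ha.le ha', Real.div_rpow ha.le ha',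
      div_le_div_iff₀ (by positivity) (by positivity)]
    linarith
  exact (Real.rpow_lt_rpow_of_exponent_lt ((one_lt_div ha'pos).2 hlt) hww').not_ge hratio

theorem WNW_update_eq_mul {n m : ℕ} (w : Fin n → ℝ) (u : Fin n → Fin m → ℝ)
    (M : Fin n → Finset (Fin m)) (i : Fin n) (c : ℝ) :
    WNW (Function.update w i c) u M =
      (∑ x ∈ M i, u i x) ^ c * ∏ j ∈ univ.erase i, (∑ x ∈ M j, u j x) ^ w j := by
  rw [WNW, ← mul_prod_erase _ _ (mem_univ i), Function.update_self]
  congr 1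
  exact prod_congr rfl fun j hj => by rw [Function.update_of_ne (ne_of_mem_erase hj)]

theorem WNW_eq_mul {n m : ℕ} (w : Fin n → ℝ) (u : Fin n → Fin m → ℝ)
    (M : Fin n → Finset (Fin m)) (i : Fin n) :
    WNW w u M =
      (∑ x ∈ M i, u i x) ^ w i * ∏ j ∈ univ.erase i, (∑ x ∈ M j, u j x) ^ w j := by
  rw [← WNW_update_eq_mul, Function.update_eq_self]

/-- MWNW satisfies weight-monotonicity: in an instance whose maximum
weighted Nash welfare is positive, if `M` maximizes the weighted Nash welfare with
weights `w`, and `M'` maximizes the weighted Nash welfare after agent `i`'s weight is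
increased to `wi' > w i`, then agent `i`'s utility under `M'` is at least her utility
under `M`. -/
theorem MWNW_weight_monotone
    (n m : ℕ) (w : Fin n → ℝ) (hw : ∀ j, 0 < w j)
    (u : Fin n → Fin m → ℝ) (hu : ∀ a b, 0 ≤ u a b)
    (i : Fin n) (wi' : ℝ) (hwi' : w i < wi')
    (M M' : Fin n → Finset (Fin m))
    (hM : IsPartition M (Finset.univ : Finset (Fin m)))
    (hM' : IsPartition M' (Finset.univ : Finset (Fin m)))
    (hpos : 0 < WNW w u M)
    (hmax : ∀ M'', IsPartition M'' (Finset.univ : Finset (Fin m)) →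
      WNW w u M'' ≤ WNW w u M)
    (hmax' : ∀ M'', IsPartition M'' (Finset.univ : Finset (Fin m)) →
      WNW (Function.update w i wi') u M'' ≤ WNW (Function.update w i wi') u M') :
    (∑ x ∈ M i, u i x) ≤ ∑ x ∈ M' i, u i x := by
  have hle := hmax M' hM'
  have hle' := hmax' M hM
  rw [WNW_eq_mul w u M i] at hpos
  rw [WNW_eq_mul w u M i, WNW_eq_mul w u M' i] at hle
  rw [WNW_update_eq_mul w u M i, WNW_update_eq_mul w u M' i] at hle'
  exact le_of_rpow_mul_le_of_rpow_mul_le (sum_nonneg fun x _ => hu i x)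
    ((hw i).trans hwi') hwi' hpos hle hle'
end

section
/- The maximum weighted Nash welfare (MWNW) solution does not satisfy weighted proportionality up to one item (WPROP1): there exists an instance with n agents (with suitable weights w_i > 0 summing appropriately) and n items, where every agent has positive utility for every item, such that every allocation maximizing the weighted Nash product Π_i u_i(M_i)^{w_i} assigns exactly one item to each agent and the resulting allocation violates WPROP1 for some agent. -/
open Finset

/-!
Take three agents with weights `9, 1, 1` and unit utility for each of three items. Giving
every agent one item has Nash welfare `1`, while any allocation leaving an agent empty-handed
has Nash welfare `0`; so every maximizer hands out exactly one item per agent. The heavy agent's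
proportional share is `9/11 · 3 = 27/11`, more than the `2` items she could reach by adding one
more item to her bundle.
-/

namespace IsPartition

variable {n m : ℕ} {M : Fin n → Finset (Fin m)} {S : Finset (Fin m)}

theorem sum_card (hM : IsPartition M S) : ∑ i, (M i).card = S.card := by
  rw [← hM.2, card_biUnion fun i _ j _ hij => hM.1 i j hij]

theorem singleton (n : ℕ) : IsPartition (fun i : Fin n => {i}) univ :=
  ⟨fun _ _ hij => disjoint_singleton.mpr hij, by ext; simp⟩

theorem card_eq_one {M : Fin n → Finset (Fin n)} (hM : IsPartition M univ)
    (hne : ∀ i, (M i).Nonempty) (i : Fin n) : (M i).card = 1 := by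
  have hsum : ∑ _i : Fin n, 1 = ∑ i, (M i).card := by simp [hM.sum_card]
  exact ((sum_eq_sum_iff_of_le fun j _ => (hne j).card_pos).mp hsum i (mem_univ i)).symm

end IsPartition

section NashWelfare

variable {n m : ℕ} {w : Fin n → ℝ} {u : Fin n → Fin m → ℝ}

theorem WNW_eq_zero_of_eq_empty {M : Fin n → Finset (Fin m)} {i : Fin n} (hw : w i ≠ 0)
    (hi : M i = ∅) : WNW w u M = 0 :=
  prod_eq_zero (mem_univ i) (by rw [hi, sum_empty, Real.zero_rpow hw])

theorem nonempty_of_WNW_ne_zero {M : Fin n → Finset (Fin m)} (hw : ∀ i, w i ≠ 0)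
    (hM : WNW w u M ≠ 0) (i : Fin n) : (M i).Nonempty :=
  nonempty_iff_ne_empty.mpr fun hi => hM (WNW_eq_zero_of_eq_empty (hw i) hi)

theorem WNW_singleton_pos {u : Fin n → Fin n → ℝ} (hu : ∀ i, 0 < u i i) :
    0 < WNW w u fun i => {i} :=
  prod_pos fun i _ => by simpa only [sum_singleton] using Real.rpow_pos_of_pos (hu i) (w i)

theorem card_eq_one_of_WNW_max {u : Fin n → Fin n → ℝ} (hw : ∀ i, w i ≠ 0)
    (hu : ∀ i, 0 < u i i) {M : Fin n → Finset (Fin n)} (hM : IsPartition M univ)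
    (hmax : ∀ M', IsPartition M' univ → WNW w u M' ≤ WNW w u M) (i : Fin n) :
    (M i).card = 1 := by
  have hpos : 0 < WNW w u M :=
    (WNW_singleton_pos hu).trans_le (hmax _ (IsPartition.singleton n))
  exact hM.card_eq_one (nonempty_of_WNW_ne_zero hw hpos.ne') i

end NashWelfare

theorem isWPROP1.share_le_card_add_one {n m : ℕ} {w : Fin n → ℝ} {M : Fin n → Finset (Fin m)}
    (h : isWPROP1 w (fun _ _ => 1) M) (i : Fin n) :
    w i / (∑ i', w i') * m ≤ (M i).card + 1 := by
  obtain ⟨B, -, hB, hle⟩ := h i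
  have hB' : (B.card : ℝ) ≤ 1 := by exact_mod_cast hB
  simp only [sum_const, card_univ, Fintype.card_fin, nsmul_eq_mul, mul_one] at hle
  linarith

/-- MWNW does not satisfy WPROP1: there is an instance with `n`
agents and `n` items in which every agent has positive utility for every item, such
that every allocation maximizing the weighted Nash welfare assigns exactly one item
to each agent and violates WPROP1. -/
theorem MWNW_not_WPROP1 :
    ∃ (n : ℕ) (w : Fin n → ℝ) (u : Fin n → Fin n → ℝ),
      (∀ i, 0 < w i) ∧ (∀ i j, 0 < u i j) ∧
      ∀ M : Fin n → Finset (Fin n), IsPartition M (Finset.univ : Finset (Fin n)) →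
        (∀ M', IsPartition M' (Finset.univ : Finset (Fin n)) →
          WNW w u M' ≤ WNW w u M) →
        (∀ i, (M i).card = 1) ∧ ¬ isWPROP1 w u M := by
  have hw : ∀ i, 0 < (![9, 1, 1] : Fin 3 → ℝ) i := by
    intro i; fin_cases i <;> norm_num
  have hu : ∀ i j : Fin 3, (0 : ℝ) < 1 := fun _ _ => one_pos
  refine ⟨3, ![9, 1, 1], fun _ _ => 1, hw, hu, fun M hM hmax => ?_⟩
  have hcard := card_eq_one_of_WNW_max (fun i => (hw i).ne') (fun i => hu i i) hM hmax
  refine ⟨hcard, fun hwprop => ?_⟩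
  have hshare := hwprop.share_le_card_add_one 0
  rw [hcard 0, Fin.sum_univ_three] at hshare
  norm_num [show (![9, 1, 1] : Fin 3 → ℝ) 2 = 1 from rfl] at hshare
end
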